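/- arXiv:2207.05339 — 2 statements merged into one kernel-verified Lean document; each statement's English description precedes it below -/
import Mathlib

section
/- Let L_v := L_v(0,∞) be the expected v-discounted occupation matrix of level 0 for the MAC started at X_0 = 0, G_v := E_0(v^{τ_1^+}; J_{τ_1^+}), and R_v := diag(π)^{-1} G̃_v^T diag(π) the time-reversed counterpart. Assuming L_v is invertible, the similarity relation L_v^{-1} G_v L_v = R_v holds. -/
open scoped Matrix

open scoped Classical

/-- Probability of a finite trajectory of increment/phase pairs of a Markov additive chain
with increment matrices `A`, started in phase `i`. -/
noncomputable def pathProb {N : ℕ} (A : ℤ → Matrix (Fin N) (Fin N) ℝ) :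
    Fin N → List (ℤ × Fin N) → ℝ
  | _, [] => 1
  | i, (m, j) :: rest => A m i j * pathProb A j rest

/-- The phase at the end of a trajectory started in phase `i`. -/
noncomputable def endPhase {N : ℕ} (i : Fin N) (l : List (ℤ × Fin N)) : Fin N :=
  l.foldl (fun _ p => p.2) i

/-- The level of the chain after `k` steps of the trajectory `l`, started at level `x`. -/
noncomputable def lev {N : ℕ} (x : ℤ) (l : List (ℤ × Fin N)) (k : ℕ) : ℤ :=
  x + ((l.take k).map Prod.fst).sum

/-- `passMat A v x a` is the matrix `E_x(v^{τ_a^+}; J_{τ_a^+})`: its `(i,j)` entry is the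
`v`-discounted transform of the first passage time above level `a` started at level `x` in
phase `i`, restricted to `{J_{τ_a^+} = j, τ_a^+ < ∞}`. -/
noncomputable def passMat {N : ℕ} (A : ℤ → Matrix (Fin N) (Fin N) ℝ) (v : ℝ) (x a : ℤ) :
    Matrix (Fin N) (Fin N) ℝ :=
  Matrix.of fun i j => ∑' l : List (ℤ × Fin N),
    if (∀ k < l.length, lev x l k < a) ∧ a ≤ lev x l l.length ∧ endPhase i l = j
    then v ^ l.length * pathProb A i l else 0

/-- `occMat A v x` is the occupation matrix `L_v(x,∞)`: its `(i,j)` entry is the expected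
`v`-discounted time spent at level `x` in phase `j`, started at level `0` in phase `i`. -/
noncomputable def occMat {N : ℕ} (A : ℤ → Matrix (Fin N) (Fin N) ℝ) (v : ℝ) (x : ℤ) :
    Matrix (Fin N) (Fin N) ℝ :=
  Matrix.of fun i j => ∑' l : List (ℤ × Fin N),
    if lev 0 l l.length = x ∧ endPhase i l = j then v ^ l.length * pathProb A i l else 0

/-- `hitMat A v y` is `E(v^{τ^{{y}}}; J_{τ^{{y}}})`, the transform matrix of the first hitting
time of level `y` started at level `0`. -/
noncomputable def hitMat {N : ℕ} (A : ℤ → Matrix (Fin N) (Fin N) ℝ) (v : ℝ) (y : ℤ) :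
    Matrix (Fin N) (Fin N) ℝ :=
  Matrix.of fun i j => ∑' l : List (ℤ × Fin N),
    if (∀ k < l.length, lev 0 l k ≠ y) ∧ lev 0 l l.length = y ∧ endPhase i l = j
    then v ^ l.length * pathProb A i l else 0

/-- `LplusMat A v n` is `L_v^+(n) = L_v(0, τ_n^+ - 1)`: the expected `v`-discounted occupation
time of level `0` strictly before first passage to the upper level `n`, started at `0`. -/
noncomputable def LplusMat {N : ℕ} (A : ℤ → Matrix (Fin N) (Fin N) ℝ) (v : ℝ) (n : ℕ) :
    Matrix (Fin N) (Fin N) ℝ :=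
  Matrix.of fun i j => ∑' l : List (ℤ × Fin N),
    if lev 0 l l.length = 0 ∧ endPhase i l = j ∧ (∀ k ≤ l.length, lev 0 l k < n)
    then v ^ l.length * pathProb A i l else 0

/-- The discrete `W_v` scale matrix: `W_v(n) = G_v^{-n} L_v^+(n)` for `n > 0` and `W_v(n) = 0`
for `n ≤ 0`. -/
noncomputable def Wmat {N : ℕ} (A : ℤ → Matrix (Fin N) (Fin N) ℝ) (v : ℝ) (n : ℤ) :
    Matrix (Fin N) (Fin N) ℝ :=
  if n ≤ 0 then 0 else (passMat A v 0 1)⁻¹ ^ n.toNat * LplusMat A v n.toNat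

/-- The probability generating matrix `F(z) = Σ_{m=-1}^∞ z^m A_{-m}` of the chain. -/
noncomputable def Fmat {N : ℕ} (A : ℤ → Matrix (Fin N) (Fin N) ℝ) (z : ℝ) :
    Matrix (Fin N) (Fin N) ℝ :=
  ∑' m : ℤ, z ^ m • A (-m)

/-- `Rmat A v = L_v^{-1} G_v L_v`, the left solution of `F(·) = v⁻¹ I`. -/
noncomputable def Rmat {N : ℕ} (A : ℤ → Matrix (Fin N) (Fin N) ℝ) (v : ℝ) :
    Matrix (Fin N) (Fin N) ℝ :=
  (occMat A v 0)⁻¹ * passMat A v 0 1 * occMat A v 0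


section Basic
variable {N : ℕ} {B : ℤ → Matrix (Fin N) (Fin N) ℝ}

theorem pathProb_nonneg (hB : ∀ m i j, 0 ≤ B m i j) (i : Fin N) (l : List (ℤ × Fin N)) :
    0 ≤ pathProb B i l := by
  induction l generalizing i with
  | nil => rw [pathProb]; exact zero_le_one
  | cons p t ih =>
      obtain ⟨m, j⟩ := p
      rw [pathProb]
      exact mul_nonneg (hB m i j) (ih j)

@[simp] theorem endPhase_nil (i : Fin N) : endPhase i ([] : List (ℤ × Fin N)) = i := rfl

theorem endPhase_cons (i : Fin N) (p : ℤ × Fin N) (l : List (ℤ × Fin N)) :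
    endPhase i (p :: l) = endPhase p.2 l := rfl

theorem endPhase_append (i : Fin N) (l1 l2 : List (ℤ × Fin N)) :
    endPhase i (l1 ++ l2) = endPhase (endPhase i l1) l2 := by
  simp [endPhase, List.foldl_append]

theorem pathProb_append (i : Fin N) :
    ∀ (l1 l2 : List (ℤ × Fin N)),
      pathProb B i (l1 ++ l2) = pathProb B i l1 * pathProb B (endPhase i l1) l2 := by
  intro l1
  induction l1 generalizing i with
  | nil => intro l2; simp [pathProb]
  | cons p t ih =>
      intro l2
      obtain ⟨m, j⟩ := p
      rw [List.cons_append, pathProb, pathProb, ih j l2, endPhase_cons, mul_assoc]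

theorem lev_zero (x : ℤ) (l : List (ℤ × Fin N)) : lev x l 0 = x := by simp [lev]

theorem lev_add (x : ℤ) (l : List (ℤ × Fin N)) (k : ℕ) : lev x l k = x + lev 0 l k := by
  simp [lev]

theorem lev_append_left (x : ℤ) {l1 : List (ℤ × Fin N)} (l2 : List (ℤ × Fin N)) {k : ℕ}
    (hk : k ≤ l1.length) : lev x (l1 ++ l2) k = lev x l1 k := by
  rw [lev, lev, List.take_append_of_le_length hk]

theorem lev_append_right (x : ℤ) (l1 l2 : List (ℤ × Fin N)) (k : ℕ) :
    lev x (l1 ++ l2) (l1.length + k) = lev (lev x l1 l1.length) l2 k := by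
  rw [lev, lev, lev, List.take_append, List.take_length, List.map_append, List.sum_append]
  rw [List.take_of_length_le (l := l1) (Nat.le_add_right _ _), Nat.add_sub_cancel_left]
  ring

theorem lev_length (l : List (ℤ × Fin N)) : lev 0 l l.length = (l.map Prod.fst).sum := by
  simp [lev]

end Basic

section Chunk2
open ENNReal
variable {N : ℕ} {B : ℤ → Matrix (Fin N) (Fin N) ℝ} {v : ℝ}

theorem pathProb_increments (hskip : ∀ m : ℤ, 2 ≤ m → B m = 0) :
    ∀ (i : Fin N) (l : List (ℤ × Fin N)), pathProb B i l ≠ 0 → ∀ p ∈ l, p.1 ≤ 1 := by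
  intro i l
  induction l generalizing i with
  | nil => intro _ p hp; simp at hp
  | cons q t ih =>
      obtain ⟨m, j⟩ := q
      intro h p hp
      rw [pathProb] at h
      rcases List.mem_cons.mp hp with rfl | hp'
      · by_contra hm
        push_neg at hm
        have : B m = 0 := hskip m (by omega)
        simp [this] at h
      · exact ih j (fun h0 => h (by rw [h0, mul_zero])) p hp'

theorem lev_succ_le (x : ℤ) {l : List (ℤ × Fin N)} (hinc : ∀ p ∈ l, p.1 ≤ 1) {k : ℕ}
    (hk : k < l.length) : lev x l (k + 1) ≤ lev x l k + 1 := by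
  rw [lev, lev, List.take_succ]
  have hg : l[k]? = some (l.get ⟨k, hk⟩) := List.getElem?_eq_getElem hk
  rw [hg]
  simp only [Option.toList_some, List.map_append, List.sum_append, List.map_cons,
    List.map_nil, List.sum_cons, List.sum_nil, add_zero]
  have : (l.get ⟨k, hk⟩).1 ≤ 1 := hinc _ (l.get_mem _)
  omega

/-- Skip-free upward: first passage to a level `≥ 1` lands exactly at `1`. -/
theorem firstpass_level {l : List (ℤ × Fin N)} (hinc : ∀ p ∈ l, p.1 ≤ 1) {n : ℕ}
    (hn : n ≤ l.length) (hlt : ∀ t < n, lev 0 l t < 1) (hge : 1 ≤ lev 0 l n) :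
    lev 0 l n = 1 ∧ 1 ≤ n := by
  rcases n with _ | m
  · rw [lev_zero] at hge; omega
  · have h1 : lev 0 l m < 1 := hlt m (Nat.lt_succ_self m)
    have h2 : lev 0 l (m + 1) ≤ lev 0 l m + 1 := lev_succ_le 0 hinc (by omega)
    constructor
    · omega
    · omega

noncomputable def wE (B : ℤ → Matrix (Fin N) (Fin N) ℝ) (v : ℝ) (i : Fin N)
    (l : List (ℤ × Fin N)) : ℝ≥0∞ :=
  ENNReal.ofReal (v ^ l.length * pathProb B i l)

theorem wE_append (hB : ∀ m i j, 0 ≤ B m i j) (hv0 : 0 < v) (i : Fin N)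
    (l1 l2 : List (ℤ × Fin N)) :
    wE B v i (l1 ++ l2) = wE B v i l1 * wE B v (endPhase i l1) l2 := by
  rw [wE, wE, wE, ← ENNReal.ofReal_mul (mul_nonneg (pow_nonneg hv0.le _) (pathProb_nonneg hB _ _))]
  congr 1
  rw [List.length_append, pathProb_append, pow_add]
  ring

theorem wE_ne_zero (hB : ∀ m i j, 0 ≤ B m i j) (hv0 : 0 < v) {i : Fin N}
    {l : List (ℤ × Fin N)} (h : pathProb B i l ≠ 0) : wE B v i l ≠ 0 := by
  rw [wE, ne_eq, ENNReal.ofReal_eq_zero, not_le]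
  exact mul_pos (pow_pos hv0 _) ((pathProb_nonneg hB i l).lt_of_ne (Ne.symm h))

theorem pathProb_ne_zero_of_wE {i : Fin N} {l : List (ℤ × Fin N)} (h : wE B v i l ≠ 0) :
    pathProb B i l ≠ 0 := by
  intro h0
  rw [wE, h0, mul_zero, ENNReal.ofReal_zero] at h
  exact h rfl

/-- ENNReal versions of the matrices. -/
noncomputable def occE (B : ℤ → Matrix (Fin N) (Fin N) ℝ) (v : ℝ) (x : ℤ) (i j : Fin N) : ℝ≥0∞ :=
  ∑' l : List (ℤ × Fin N),
    if lev 0 l l.length = x ∧ endPhase i l = j then wE B v i l else 0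

noncomputable def passE (B : ℤ → Matrix (Fin N) (Fin N) ℝ) (v : ℝ) (i j : Fin N) : ℝ≥0∞ :=
  ∑' l : List (ℤ × Fin N),
    if (∀ k < l.length, lev 0 l k < 1) ∧ 1 ≤ lev 0 l l.length ∧ endPhase i l = j
    then wE B v i l else 0

noncomputable def visE (B : ℤ → Matrix (Fin N) (Fin N) ℝ) (v : ℝ) (i j : Fin N) : ℝ≥0∞ :=
  ∑' l : List (ℤ × Fin N),
    if (∀ t < l.length, ¬(lev 0 l t = 0 ∧ endPhase i (l.take t) = j)) ∧
        lev 0 l l.length = 0 ∧ endPhase i l = j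
    then wE B v i l else 0

theorem tsum_nonneg_toReal {ι : Type*} {f : ι → ℝ} (hf : ∀ i, 0 ≤ f i) :
    ∑' i, f i = (∑' i, ENNReal.ofReal (f i)).toReal := by
  by_cases h : Summable f
  · rw [← ENNReal.ofReal_tsum_of_nonneg hf h, ENNReal.toReal_ofReal (tsum_nonneg hf)]
  · rw [tsum_eq_zero_of_not_summable h]
    rcases eq_or_ne (∑' i, ENNReal.ofReal (f i)) ∞ with he | he
    · rw [he]; simp
    · exfalso
      apply h
      have := ENNReal.summable_toReal he
      exact this.congr fun i => ENNReal.toReal_ofReal (hf i)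

theorem occMat_eq (hB : ∀ m i j, 0 ≤ B m i j) (hv0 : 0 < v) (x : ℤ) (i j : Fin N) :
    occMat B v x i j = (occE B v x i j).toReal := by
  rw [occMat, Matrix.of_apply, occE,
    tsum_nonneg_toReal (f := fun l : List (ℤ × Fin N) =>
      if lev 0 l l.length = x ∧ endPhase i l = j then v ^ l.length * pathProb B i l else 0)
      (fun l => by
        split_ifs
        · exact mul_nonneg (pow_nonneg hv0.le _) (pathProb_nonneg hB _ _)
        · exact le_refl 0)]
  congr 1
  apply tsum_congr
  intro l
  split_ifs
  · rfl
  · exact ENNReal.ofReal_zero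

theorem passMat_eq (hB : ∀ m i j, 0 ≤ B m i j) (hv0 : 0 < v) (i j : Fin N) :
    passMat B v 0 1 i j = (passE B v i j).toReal := by
  rw [passMat, Matrix.of_apply, passE,
    tsum_nonneg_toReal (f := fun l : List (ℤ × Fin N) =>
      if (∀ k < l.length, lev 0 l k < 1) ∧ 1 ≤ lev 0 l l.length ∧ endPhase i l = j
      then v ^ l.length * pathProb B i l else 0)
      (fun l => by
        split_ifs
        · exact mul_nonneg (pow_nonneg hv0.le _) (pathProb_nonneg hB _ _)
        · exact le_refl 0)]
  congr 1
  apply tsum_congr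
  intro l
  split_ifs
  · rfl
  · exact ENNReal.ofReal_zero

end Chunk2

section Chunk3
open ENNReal
variable {N : ℕ} {B : ℤ → Matrix (Fin N) (Fin N) ℝ} {v : ℝ}

theorem ite_mul_ne_zero' {c d : Prop} [Decidable c] [Decidable d] {a b : ℝ≥0∞}
    (hc : c) (hd : d) (ha : a ≠ 0) (hb : b ≠ 0) :
    (if c then a else 0) * (if d then b else 0) ≠ 0 := by
  rw [if_pos hc, if_pos hd]; exact mul_ne_zero ha hb

theorem ite_ne_zero' {c : Prop} [Decidable c] {a : ℝ≥0∞} (h : (if c then a else 0) ≠ 0) :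
    c ∧ a ≠ 0 := by
  by_cases hc : c
  · exact ⟨hc, by simpa [hc] using h⟩
  · simp [hc] at h

theorem fp_len_le {l1 l2 l1' l2' : List (ℤ × Fin N)} (hL : l1 ++ l2 = l1' ++ l2')
    (hlt' : ∀ t < l1'.length, lev (0:ℤ) l1' t < 1) (hge : 1 ≤ lev (0:ℤ) l1 l1.length) :
    l1'.length ≤ l1.length := by
  by_contra hcon
  push_neg at hcon
  have h1 : lev (0:ℤ) l1' l1.length < 1 := hlt' _ hcon
  have h2 : lev (0:ℤ) l1' l1.length = lev (0:ℤ) l1 l1.length := by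
    rw [← lev_append_left (0:ℤ) l2' (le_of_lt hcon), ← hL,
      lev_append_left (0:ℤ) l2 (le_refl _)]
  omega

theorem occE_one_decomp (hB : ∀ m i j, 0 ≤ B m i j) (hskip : ∀ m : ℤ, 2 ≤ m → B m = 0)
    (hv0 : 0 < v) (i j : Fin N) :
    occE B v 1 i j = ∑ k : Fin N, passE B v i k * occE B v 0 k j := by
  classical
  set g : Fin N × List (ℤ × Fin N) × List (ℤ × Fin N) → ℝ≥0∞ := fun q =>
    (if (∀ t < q.2.1.length, lev 0 q.2.1 t < 1) ∧ 1 ≤ lev 0 q.2.1 q.2.1.length ∧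
        endPhase i q.2.1 = q.1 then wE B v i q.2.1 else 0) *
    (if lev 0 q.2.2 q.2.2.length = 0 ∧ endPhase q.1 q.2.2 = j then wE B v q.1 q.2.2 else 0)
    with hgdef
  have hrhs : ∑ k : Fin N, passE B v i k * occE B v 0 k j = ∑' q, g q := by
    rw [← tsum_fintype (L := SummationFilter.unconditional _), ENNReal.tsum_prod']
    apply tsum_congr
    intro k
    rw [ENNReal.tsum_prod']
    rw [passE, ← ENNReal.tsum_mul_right]
    apply tsum_congr
    intro l1
    rw [occE, ← ENNReal.tsum_mul_left]
  rw [hrhs, occE]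
  refine tsum_eq_tsum_of_ne_zero_bij (fun q => q.1.2.1 ++ q.1.2.2) ?_ ?_ ?_
  · -- injectivity
    rintro ⟨⟨k, l1, l2⟩, hq⟩ ⟨⟨k', l1', l2'⟩, hq'⟩ hEq
    simp only [Function.mem_support, hgdef] at hq hq'
    obtain ⟨hf1, hf2⟩ := mul_ne_zero_iff.mp hq
    obtain ⟨hf1', hf2'⟩ := mul_ne_zero_iff.mp hq'
    obtain ⟨⟨hlt1, hge1, hend1⟩, _⟩ := ite_ne_zero' hf1
    obtain ⟨⟨hlt1', hge1', hend1'⟩, _⟩ := ite_ne_zero' hf1'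
    simp only at hEq
    have hlen : l1.length = l1'.length :=
      le_antisymm (fp_len_le hEq.symm hlt1 hge1') (fp_len_le hEq hlt1' hge1)
    obtain ⟨h1, h2⟩ := List.append_inj hEq hlen
    subst h1; subst h2
    have : k = k' := by rw [← hend1, ← hend1']
    subst this
    rfl
  · -- support f ⊆ range
    rintro L hL
    simp only [Function.mem_support] at hL
    obtain ⟨⟨hlev, hend⟩, hw⟩ := ite_ne_zero' hL
    have hpp : pathProb B i L ≠ 0 := pathProb_ne_zero_of_wE hw
    have hinc : ∀ p ∈ L, p.1 ≤ 1 := pathProb_increments hskip i L hpp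
    have hex : ∃ t, 1 ≤ lev (0:ℤ) L t := ⟨L.length, by rw [hlev]⟩
    set t0 := Nat.find hex with ht0def
    have ht0spec : 1 ≤ lev (0:ℤ) L t0 := Nat.find_spec hex
    have ht0min : ∀ t < t0, ¬ 1 ≤ lev (0:ℤ) L t := fun t ht => Nat.find_min hex ht
    have ht0le : t0 ≤ L.length := Nat.find_le (by rw [hlev])
    set l1 := L.take t0 with hl1def
    set l2 := L.drop t0 with hl2def
    have hl1len : l1.length = t0 := by rw [hl1def, List.length_take]; omega
    have happ : l1 ++ l2 = L := List.take_append_drop t0 L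
    have hlev_take : ∀ t ≤ t0, lev (0:ℤ) l1 t = lev (0:ℤ) L t := by
      intro t ht
      rw [hl1def, lev, lev, List.take_take, min_eq_left ht]
    have hppsplit : pathProb B i l1 * pathProb B (endPhase i l1) l2 = pathProb B i L := by
      rw [← pathProb_append, happ]
    have hpp1 : pathProb B i l1 ≠ 0 := fun h0 => hpp (by rw [← hppsplit, h0, zero_mul])
    have hpp2 : pathProb B (endPhase i l1) l2 ≠ 0 :=
      fun h0 => hpp (by rw [← hppsplit, h0, mul_zero])
    have hlt1 : ∀ t < l1.length, lev (0:ℤ) l1 t < 1 := by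
      intro t ht
      rw [hl1len] at ht
      rw [hlev_take t (le_of_lt ht)]
      have := ht0min t ht
      omega
    have hge1 : 1 ≤ lev (0:ℤ) l1 l1.length := by
      rw [hl1len, hlev_take t0 (le_refl _)]; exact ht0spec
    have hinc1 : ∀ p ∈ l1, p.1 ≤ 1 := fun p hp => hinc p (List.take_subset _ _ hp)
    have hfp : lev (0:ℤ) l1 l1.length = 1 :=
      (firstpass_level hinc1 (le_refl _) hlt1 hge1).1
    have hlenL : L.length = l1.length + l2.length := by rw [← happ, List.length_append]
    have hlev2 : lev (0:ℤ) l2 l2.length = 0 := by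
      have h1 : lev (0:ℤ) (l1 ++ l2) (l1 ++ l2).length
          = lev (lev (0:ℤ) l1 l1.length) l2 l2.length := by
        rw [List.length_append]
        exact lev_append_right 0 l1 l2 l2.length
      rw [happ, hlev, hfp, lev_add] at h1
      omega
    have hend2 : endPhase (endPhase i l1) l2 = j := by
      rw [← endPhase_append, happ, hend]
    refine ⟨⟨⟨endPhase i l1, l1, l2⟩, ?_⟩, ?_⟩
    · exact Function.mem_support.mpr (ite_mul_ne_zero' ⟨hlt1, hge1, rfl⟩ ⟨hlev2, hend2⟩
        (wE_ne_zero hB hv0 hpp1) (wE_ne_zero hB hv0 hpp2))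
    · exact happ
  · -- hfg
    rintro ⟨⟨k, l1, l2⟩, hq⟩
    simp only [Function.mem_support, hgdef] at hq
    obtain ⟨hf1, hf2⟩ := mul_ne_zero_iff.mp hq
    obtain ⟨⟨hlt1, hge1, hend1⟩, hw1⟩ := ite_ne_zero' hf1
    obtain ⟨⟨hlev2, hend2⟩, hw2⟩ := ite_ne_zero' hf2
    have hpp1 : pathProb B i l1 ≠ 0 := pathProb_ne_zero_of_wE hw1
    have hinc1 : ∀ p ∈ l1, p.1 ≤ 1 := pathProb_increments hskip i l1 hpp1
    have hfp : lev (0:ℤ) l1 l1.length = 1 :=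
      (firstpass_level hinc1 (le_refl _) hlt1 hge1).1
    have hcond : lev (0:ℤ) (l1 ++ l2) (l1 ++ l2).length = 1 ∧ endPhase i (l1 ++ l2) = j := by
      constructor
      · rw [List.length_append, lev_append_right, hfp, lev_add, hlev2, add_zero]
      · rw [endPhase_append, hend1, hend2]
    show (if lev 0 (l1 ++ l2) (l1 ++ l2).length = 1 ∧ endPhase i (l1 ++ l2) = j
        then wE B v i (l1 ++ l2) else 0)
      = (if (∀ t < l1.length, lev 0 l1 t < 1) ∧ 1 ≤ lev 0 l1 l1.length ∧
            endPhase i l1 = k then wE B v i l1 else 0) *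
        (if lev 0 l2 l2.length = 0 ∧ endPhase k l2 = j then wE B v k l2 else 0)
    rw [if_pos hcond, if_pos ⟨hlt1, hge1, hend1⟩, if_pos ⟨hlev2, hend2⟩,
      wE_append hB hv0, hend1]

end Chunk3

section Chunk4
open ENNReal
variable {N : ℕ} {B : ℤ → Matrix (Fin N) (Fin N) ℝ} {v : ℝ}

theorem fv_len_le {i j : Fin N} {l1 l2 l1' l2' : List (ℤ × Fin N)} (hL : l1 ++ l2 = l1' ++ l2')
    (h1' : ∀ t < l1'.length, ¬(lev (0:ℤ) l1' t = 0 ∧ endPhase i (l1'.take t) = j))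
    (hlev : lev (0:ℤ) l1 l1.length = 0) (hend : endPhase i l1 = j) :
    l1'.length ≤ l1.length := by
  by_contra hcon
  push_neg at hcon
  refine h1' l1.length hcon ⟨?_, ?_⟩
  · rw [← lev_append_left (0:ℤ) l2' (le_of_lt hcon), ← hL,
      lev_append_left (0:ℤ) l2 (le_refl _)]
    exact hlev
  · rw [← List.take_append_of_le_length (le_of_lt hcon), ← hL, List.take_left]
    exact hend

theorem occE_zero_decomp (hB : ∀ m i j, 0 ≤ B m i j) (hv0 : 0 < v) (i j : Fin N) :
    occE B v 0 i j = visE B v i j * occE B v 0 j j := by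
  classical
  set g : List (ℤ × Fin N) × List (ℤ × Fin N) → ℝ≥0∞ := fun q =>
    (if (∀ t < q.1.length, ¬(lev 0 q.1 t = 0 ∧ endPhase i (q.1.take t) = j)) ∧
        lev 0 q.1 q.1.length = 0 ∧ endPhase i q.1 = j then wE B v i q.1 else 0) *
    (if lev 0 q.2 q.2.length = 0 ∧ endPhase j q.2 = j then wE B v j q.2 else 0) with hgdef
  have hrhs : visE B v i j * occE B v 0 j j = ∑' q, g q := by
    rw [ENNReal.tsum_prod', visE, ← ENNReal.tsum_mul_right]
    apply tsum_congr
    intro l1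
    rw [occE, ← ENNReal.tsum_mul_left]
  rw [hrhs, occE]
  refine tsum_eq_tsum_of_ne_zero_bij (fun q => q.1.1 ++ q.1.2) ?_ ?_ ?_
  · rintro ⟨⟨l1, l2⟩, hq⟩ ⟨⟨l1', l2'⟩, hq'⟩ hEq
    simp only [Function.mem_support, hgdef] at hq hq'
    obtain ⟨hf1, hf2⟩ := mul_ne_zero_iff.mp hq
    obtain ⟨hf1', hf2'⟩ := mul_ne_zero_iff.mp hq'
    obtain ⟨⟨hnv, hlev1, hend1⟩, _⟩ := ite_ne_zero' hf1
    obtain ⟨⟨hnv', hlev1', hend1'⟩, _⟩ := ite_ne_zero' hf1'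
    simp only at hEq
    have hlen : l1.length = l1'.length :=
      le_antisymm (fv_len_le hEq.symm hnv hlev1' hend1') (fv_len_le hEq hnv' hlev1 hend1)
    obtain ⟨h1, h2⟩ := List.append_inj hEq hlen
    subst h1; subst h2
    rfl
  · rintro L hL
    simp only [Function.mem_support] at hL
    obtain ⟨⟨hlev, hend⟩, hw⟩ := ite_ne_zero' hL
    have hpp : pathProb B i L ≠ 0 := pathProb_ne_zero_of_wE hw
    have hex : ∃ t, lev (0:ℤ) L t = 0 ∧ endPhase i (L.take t) = j :=
      ⟨L.length, by rw [List.take_length]; exact ⟨hlev, hend⟩⟩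
    set t0 := Nat.find hex with ht0def
    have ht0spec := Nat.find_spec hex
    have ht0min : ∀ t < t0, ¬(lev (0:ℤ) L t = 0 ∧ endPhase i (L.take t) = j) :=
      fun t ht => Nat.find_min hex ht
    have ht0le : t0 ≤ L.length :=
      Nat.find_le (by rw [List.take_length]; exact ⟨hlev, hend⟩)
    set l1 := L.take t0 with hl1def
    set l2 := L.drop t0 with hl2def
    have hl1len : l1.length = t0 := by rw [hl1def, List.length_take]; omega
    have happ : l1 ++ l2 = L := List.take_append_drop t0 L
    have hlev_take : ∀ t ≤ t0, lev (0:ℤ) l1 t = lev (0:ℤ) L t := by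
      intro t ht
      rw [hl1def, lev, lev, List.take_take, min_eq_left ht]
    have htake_take : ∀ t ≤ t0, l1.take t = L.take t := by
      intro t ht
      rw [hl1def, List.take_take, min_eq_left ht]
    have hppsplit : pathProb B i l1 * pathProb B (endPhase i l1) l2 = pathProb B i L := by
      rw [← pathProb_append, happ]
    have hpp1 : pathProb B i l1 ≠ 0 := fun h0 => hpp (by rw [← hppsplit, h0, zero_mul])
    have hpp2 : pathProb B (endPhase i l1) l2 ≠ 0 :=
      fun h0 => hpp (by rw [← hppsplit, h0, mul_zero])
    have hnv : ∀ t < l1.length, ¬(lev (0:ℤ) l1 t = 0 ∧ endPhase i (l1.take t) = j) := by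
      intro t ht
      rw [hl1len] at ht
      rw [hlev_take t (le_of_lt ht), htake_take t (le_of_lt ht)]
      exact ht0min t ht
    have hlev1 : lev (0:ℤ) l1 l1.length = 0 := by
      rw [hl1len, hlev_take t0 (le_refl _)]; exact ht0spec.1
    have hend1 : endPhase i l1 = j := by
      rw [hl1def]; exact ht0spec.2
    have hlev2 : lev (0:ℤ) l2 l2.length = 0 := by
      have h1 : lev (0:ℤ) (l1 ++ l2) (l1 ++ l2).length
          = lev (lev (0:ℤ) l1 l1.length) l2 l2.length := by
        rw [List.length_append]
        exact lev_append_right 0 l1 l2 l2.length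
      rw [happ, hlev, hlev1, lev_add] at h1
      omega
    have hend2 : endPhase j l2 = j := by
      rw [← hend1, ← endPhase_append, happ, hend, hend1]
    rw [hend1] at hpp2
    refine ⟨⟨⟨l1, l2⟩, ?_⟩, ?_⟩
    · exact Function.mem_support.mpr (ite_mul_ne_zero' ⟨hnv, hlev1, hend1⟩ ⟨hlev2, hend2⟩
        (wE_ne_zero hB hv0 hpp1) (wE_ne_zero hB hv0 hpp2))
    · exact happ
  · rintro ⟨⟨l1, l2⟩, hq⟩
    simp only [Function.mem_support, hgdef] at hq
    obtain ⟨hf1, hf2⟩ := mul_ne_zero_iff.mp hq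
    obtain ⟨⟨hnv, hlev1, hend1⟩, hw1⟩ := ite_ne_zero' hf1
    obtain ⟨⟨hlev2, hend2⟩, hw2⟩ := ite_ne_zero' hf2
    have hcond : lev (0:ℤ) (l1 ++ l2) (l1 ++ l2).length = 0 ∧ endPhase i (l1 ++ l2) = j := by
      constructor
      · rw [List.length_append, lev_append_right, hlev1, lev_add, hlev2]
        ring
      · rw [endPhase_append, hend1, hend2]
    show (if lev 0 (l1 ++ l2) (l1 ++ l2).length = 0 ∧ endPhase i (l1 ++ l2) = j
        then wE B v i (l1 ++ l2) else 0)
      = (if (∀ t < l1.length, ¬(lev 0 l1 t = 0 ∧ endPhase i (l1.take t) = j)) ∧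
            lev 0 l1 l1.length = 0 ∧ endPhase i l1 = j then wE B v i l1 else 0) *
        (if lev 0 l2 l2.length = 0 ∧ endPhase j l2 = j then wE B v j l2 else 0)
    rw [if_pos hcond, if_pos ⟨hnv, hlev1, hend1⟩, if_pos ⟨hlev2, hend2⟩,
      wE_append hB hv0, hend1]

end Chunk4

section Chunk5
open ENNReal
variable {N : ℕ} {B : ℤ → Matrix (Fin N) (Fin N) ℝ} {v : ℝ}

/-- Kraft-type inequality: prefix-free families of paths have total probability at most 1. -/
theorem kraft_finset (hB : ∀ m i j, 0 ≤ B m i j)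
    (hrow : ∀ x : Fin N, HasSum (fun p : ℤ × Fin N => B p.1 x p.2) 1) (d : ℤ × Fin N) :
    ∀ (n : ℕ) (S : Finset (List (ℤ × Fin N))) (x : Fin N),
      S.sum List.length ≤ n → (∀ l1 ∈ S, ∀ l2 ∈ S, l1 <+: l2 → l1 = l2) →
      ∑ l ∈ S, pathProb B x l ≤ 1 := by
  intro n
  induction n with
  | zero =>
      intro S x hn hpf
      have hn' : ∑ l ∈ S, l.length ≤ 0 := hn
      have hsub : S ⊆ {[]} := by
        intro l hl
        have h1 : l.length ≤ ∑ l ∈ S, l.length :=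
          Finset.single_le_sum (f := fun l => List.length l) (fun a _ => Nat.zero_le _) hl
        have : l.length = 0 := by omega
        exact Finset.mem_singleton.mpr (List.length_eq_zero_iff.mp this)
      calc ∑ l ∈ S, pathProb B x l ≤ ∑ l ∈ ({[]} : Finset (List (ℤ × Fin N))), pathProb B x l :=
            Finset.sum_le_sum_of_subset_of_nonneg hsub
              (fun l _ _ => pathProb_nonneg hB x l)
        _ = 1 := by simp [pathProb]
  | succ n ih =>
      intro S x hn hpf
      by_cases hnil : ([] : List (ℤ × Fin N)) ∈ S
      · have hsub : S ⊆ {[]} := by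
          intro l hl
          exact Finset.mem_singleton.mpr (hpf [] hnil l hl List.nil_prefix).symm
        calc ∑ l ∈ S, pathProb B x l ≤ ∑ l ∈ ({[]} : Finset (List (ℤ × Fin N))), pathProb B x l :=
              Finset.sum_le_sum_of_subset_of_nonneg hsub
                (fun l _ _ => pathProb_nonneg hB x l)
          _ = 1 := by simp [pathProb]
      · classical
        have hne : ∀ l ∈ S, l ≠ [] := fun l hl h0 => hnil (h0 ▸ hl)
        set hd : List (ℤ × Fin N) → ℤ × Fin N := fun l => l.head?.getD d with hhd
        have hsplit : ∑ l ∈ S, pathProb B x l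
            = ∑ p ∈ S.image hd, ∑ l ∈ S.filter (fun l => hd l = p), pathProb B x l :=
          (Finset.sum_fiberwise_of_maps_to (fun l hl => Finset.mem_image_of_mem hd hl) _).symm
        have hbound : ∀ p ∈ S.image hd,
            ∑ l ∈ S.filter (fun l => hd l = p), pathProb B x l ≤ B p.1 x p.2 := by
          intro p hp
          have hcons : ∀ l ∈ S.filter (fun l => hd l = p), l = p :: l.tail := by
            intro l hl
            obtain ⟨hlS, hlhd⟩ := Finset.mem_filter.mp hl
            obtain ⟨a, t, rfl⟩ := List.exists_cons_of_ne_nil (hne l hlS)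
            simp only [hhd, List.head?_cons, Option.getD_some] at hlhd
            rw [hlhd, List.tail_cons]
          set Sp := (S.filter (fun l => hd l = p)).image List.tail with hSp
          have hinj : ∀ l1 ∈ S.filter (fun l => hd l = p), ∀ l2 ∈ S.filter (fun l => hd l = p),
              l1.tail = l2.tail → l1 = l2 := by
            intro l1 h1 l2 h2 ht
            rw [hcons l1 h1, hcons l2 h2, ht]
          have hsum_tail : ∑ l ∈ S.filter (fun l => hd l = p), pathProb B x l
              = B p.1 x p.2 * ∑ t ∈ Sp, pathProb B p.2 t := by
            rw [hSp, Finset.sum_image hinj, Finset.mul_sum]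
            apply Finset.sum_congr rfl
            intro l hl
            conv_lhs => rw [hcons l hl]
            rw [pathProb]
          -- the tail family is prefix-free
          have hpfSp : ∀ t1 ∈ Sp, ∀ t2 ∈ Sp, t1 <+: t2 → t1 = t2 := by
            intro t1 h1 t2 h2 hpre
            obtain ⟨l1, hl1, rfl⟩ := Finset.mem_image.mp h1
            obtain ⟨l2, hl2, rfl⟩ := Finset.mem_image.mp h2
            have : l1 = l2 := by
              apply hpf l1 (Finset.mem_filter.mp hl1).1 l2 (Finset.mem_filter.mp hl2).1
              rw [hcons l1 hl1, hcons l2 hl2]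
              exact List.cons_prefix_cons.mpr ⟨rfl, hpre⟩
            rw [this]
          -- measure decreases
          -- measure decreases
          obtain ⟨l0, hl0⟩ := Finset.mem_image.mp hp
          have hfne : l0 ∈ S.filter (fun l => hd l = p) := Finset.mem_filter.mpr ⟨hl0.1, hl0.2⟩
          have hcard : ∑ t ∈ Sp, t.length ≤ n := by
            have h1 : ∑ t ∈ Sp, t.length = ∑ l ∈ S.filter (fun l => hd l = p), l.tail.length := by
              rw [hSp]
              exact Finset.sum_image hinj
            have he : ∀ l ∈ S.filter (fun l => hd l = p), l.length = l.tail.length + 1 := by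
              intro l hl
              conv_lhs => rw [hcons l hl]
              rw [List.length_cons]
            have hc1 : 1 ≤ ∑ _l ∈ S.filter (fun l => hd l = p), 1 :=
              Finset.single_le_sum (f := fun _ => 1) (fun _ _ => Nat.zero_le _) hfne
            have h2 : ∑ l ∈ S.filter (fun l => hd l = p), l.length
                = ∑ l ∈ S.filter (fun l => hd l = p), l.tail.length
                  + ∑ _l ∈ S.filter (fun l => hd l = p), 1 := by
              rw [← Finset.sum_add_distrib]
              exact Finset.sum_congr rfl he
            have h3 : ∑ l ∈ S.filter (fun l => hd l = p), l.length ≤ ∑ l ∈ S, l.length :=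
              Finset.sum_le_sum_of_subset (Finset.filter_subset _ _)
            have hn' : ∑ l ∈ S, l.length ≤ n + 1 := hn
            omega
          have := ih Sp p.2 hcard hpfSp
          calc ∑ l ∈ S.filter (fun l => hd l = p), pathProb B x l
              = B p.1 x p.2 * ∑ t ∈ Sp, pathProb B p.2 t := hsum_tail
            _ ≤ B p.1 x p.2 * 1 := by
                apply mul_le_mul_of_nonneg_left this (hB _ _ _)
            _ = B p.1 x p.2 := mul_one _
        calc ∑ l ∈ S, pathProb B x l
            = ∑ p ∈ S.image hd, ∑ l ∈ S.filter (fun l => hd l = p), pathProb B x l := hsplit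
          _ ≤ ∑ p ∈ S.image hd, B p.1 x p.2 := Finset.sum_le_sum hbound
          _ ≤ 1 := sum_le_hasSum _ (fun p _ => hB _ _ _) (hrow x)

theorem kraft_tsum (hB : ∀ m i j, 0 ≤ B m i j)
    (hrow : ∀ x : Fin N, HasSum (fun p : ℤ × Fin N => B p.1 x p.2) 1) (d : ℤ × Fin N)
    (hv0 : 0 < v) (hv1 : v ≤ 1) {P : List (ℤ × Fin N) → Prop} [DecidablePred P]
    (hpf : ∀ l1 l2, P l1 → P l2 → l1 <+: l2 → l1 = l2) (x : Fin N) :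
    ∑' l : List (ℤ × Fin N), (if P l then wE B v x l else 0) ≤ 1 := by
  classical
  rw [ENNReal.tsum_eq_iSup_sum]
  apply iSup_le
  intro S
  calc ∑ l ∈ S, (if P l then wE B v x l else 0)
      = ∑ l ∈ S.filter P, wE B v x l := (Finset.sum_filter _ _).symm
    _ ≤ ∑ l ∈ S.filter P, ENNReal.ofReal (pathProb B x l) := by
        apply Finset.sum_le_sum
        intro l _
        rw [wE]
        apply ENNReal.ofReal_le_ofReal
        have h1 : v ^ l.length ≤ 1 := pow_le_one₀ hv0.le hv1
        nlinarith [pathProb_nonneg hB x l, pow_nonneg hv0.le l.length]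
    _ = ENNReal.ofReal (∑ l ∈ S.filter P, pathProb B x l) :=
        (ENNReal.ofReal_sum_of_nonneg (fun l _ => pathProb_nonneg hB x l)).symm
    _ ≤ ENNReal.ofReal 1 := by
        apply ENNReal.ofReal_le_ofReal
        apply kraft_finset hB hrow d ((S.filter P).sum List.length) _ x (le_refl _)
        intro l1 h1 l2 h2
        exact hpf l1 l2 (Finset.mem_filter.mp h1).2 (Finset.mem_filter.mp h2).2
    _ = 1 := ENNReal.ofReal_one

end Chunk5

section Chunk6
open ENNReal
variable {N : ℕ} {B B' : ℤ → Matrix (Fin N) (Fin N) ℝ} {v : ℝ}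

/-- Time reversal of a trajectory started in phase `i`. -/
noncomputable def revP : Fin N → List (ℤ × Fin N) → List (ℤ × Fin N)
  | _, [] => []
  | i, (m, j) :: rest => revP j rest ++ [(m, i)]

@[simp] theorem revP_nil (i : Fin N) : revP i [] = [] := rfl

theorem revP_cons (i : Fin N) (m : ℤ) (j : Fin N) (rest : List (ℤ × Fin N)) :
    revP i ((m, j) :: rest) = revP j rest ++ [(m, i)] := rfl

theorem revP_length (i : Fin N) (l : List (ℤ × Fin N)) : (revP i l).length = l.length := by
  induction l generalizing i with
  | nil => rfl
  | cons p rest ih =>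
      obtain ⟨m, j⟩ := p
      rw [revP_cons, List.length_append, ih j]
      simp

theorem revP_sum (i : Fin N) (l : List (ℤ × Fin N)) :
    ((revP i l).map Prod.fst).sum = (l.map Prod.fst).sum := by
  induction l generalizing i with
  | nil => rfl
  | cons p rest ih =>
      obtain ⟨m, j⟩ := p
      rw [revP_cons, List.map_append, List.sum_append, ih j]
      simp [add_comm]

theorem endPhase_revP (i : Fin N) {l : List (ℤ × Fin N)} (h : l ≠ []) (k : Fin N) :
    endPhase k (revP i l) = i := by
  induction l generalizing i k with
  | nil => exact absurd rfl h
  | cons p rest ih =>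
      obtain ⟨m, j⟩ := p
      rw [revP_cons, endPhase_append]
      simp [endPhase]

theorem endPhase_endPhase_revP (i : Fin N) (l : List (ℤ × Fin N)) :
    endPhase (endPhase i l) (revP i l) = i := by
  rcases eq_or_ne l [] with rfl | h
  · simp
  · exact endPhase_revP i h _

theorem revP_append (a : Fin N) (l1 l2 : List (ℤ × Fin N)) :
    revP a (l1 ++ l2) = revP (endPhase a l1) l2 ++ revP a l1 := by
  induction l1 generalizing a with
  | nil => simp
  | cons p t ih =>
      obtain ⟨m, j⟩ := p
      rw [List.cons_append, revP_cons, ih j, revP_cons, endPhase_cons, List.append_assoc]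

theorem revP_revP (i : Fin N) (l : List (ℤ × Fin N)) :
    revP (endPhase i l) (revP i l) = l := by
  induction l generalizing i with
  | nil => simp
  | cons p rest ih =>
      obtain ⟨m, j⟩ := p
      rw [endPhase_cons, revP_cons, revP_append, endPhase_endPhase_revP, ih j]
      rfl

/-- The fundamental time-reversal identity for path probabilities. -/
theorem pathProb_rev (sp : Fin N → ℝ)
    (hrel : ∀ m x y, sp x * B m x y = sp y * B' m y x) (i : Fin N) (l : List (ℤ × Fin N)) :
    sp i * pathProb B i l = sp (endPhase i l) * pathProb B' (endPhase i l) (revP i l) := by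
  induction l generalizing i with
  | nil => simp [pathProb]
  | cons p rest ih =>
      obtain ⟨m, j⟩ := p
      rw [endPhase_cons, revP_cons, pathProb, pathProb_append, endPhase_endPhase_revP]
      dsimp only
      have h1 : pathProb B' j [(m, i)] = B' m j i := by simp [pathProb]
      rw [h1]
      linear_combination (B' m j i) * ih j + (pathProb B j rest) * hrel m i j

/-- Reversal identity for the ENNReal occupation kernels. -/
theorem occE_rev (sp : Fin N → ℝ) (hsp : ∀ x, 0 < sp x)
    (hB : ∀ m i j, 0 ≤ B m i j) (hB' : ∀ m i j, 0 ≤ B' m i j)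
    (hrel : ∀ m x y, sp x * B m x y = sp y * B' m y x) (hv0 : 0 < v)
    (x : ℤ) (i j : Fin N) :
    ENNReal.ofReal (sp i) * occE B v x i j = ENNReal.ofReal (sp j) * occE B' v x j i := by
  classical
  rw [occE, occE, ← ENNReal.tsum_mul_left, ← ENNReal.tsum_mul_left]
  have key : ∀ (k1 k2 : Fin N) (C C' : ℤ → Matrix (Fin N) (Fin N) ℝ)
      (_ : ∀ m i j, 0 ≤ C m i j) (_ : ∀ m x y, sp x * C m x y = sp y * C' m y x)
      (l : List (ℤ × Fin N)), endPhase k1 l = k2 →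
      ENNReal.ofReal (sp k1) * wE C v k1 l = ENNReal.ofReal (sp k2) * wE C' v k2 (revP k1 l) := by
    intro k1 k2 C C' hC hrelC l hend
    rw [wE, wE, ← ENNReal.ofReal_mul (hsp k1).le, ← ENNReal.ofReal_mul (hsp k2).le]
    congr 1
    have := pathProb_rev sp hrelC k1 l
    rw [hend] at this
    rw [revP_length]
    linear_combination (v ^ l.length) * this
  have hrel' : ∀ m x y, sp x * B' m x y = sp y * B m y x := by
    intro m x y
    rw [← hrel m y x]
  refine tsum_eq_tsum_of_ne_zero_bij (fun q => revP j q.1) ?_ ?_ ?_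
  · rintro ⟨l1, h1⟩ ⟨l2, h2⟩ hEq
    simp only [Function.mem_support] at h1 h2
    have hc1 := (ite_ne_zero' (fun h0 => h1 (by rw [h0, mul_zero]))).1
    have hc2 := (ite_ne_zero' (fun h0 => h2 (by rw [h0, mul_zero]))).1
    simp only at hEq
    apply Subtype.ext
    calc l1 = revP (endPhase j l1) (revP j l1) := (revP_revP j l1).symm
      _ = revP (endPhase j l2) (revP j l2) := by rw [hc1.2, hEq, ← hc2.2]
      _ = l2 := revP_revP j l2
  · rintro L hL
    simp only [Function.mem_support] at hL
    have hw : ENNReal.ofReal (sp i) * wE B v i L ≠ 0 :=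
      fun h0 => hL (by rw [if_pos (ite_ne_zero' (fun h1 => hL (by rw [h1, mul_zero]))).1, h0])
    obtain ⟨hlev, hend⟩ := (ite_ne_zero' (fun h0 => hL (by rw [h0, mul_zero]))).1
    refine ⟨⟨revP i L, ?_⟩, ?_⟩
    · simp only [Function.mem_support]
      have hcond : lev 0 (revP i L) (revP i L).length = x ∧ endPhase j (revP i L) = i := by
        constructor
        · rw [lev, List.take_of_length_le (le_refl _), revP_sum]
          rw [lev, List.take_of_length_le (le_refl _)] at hlev
          exact hlev
        · rw [← hend]
          exact endPhase_endPhase_revP i L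
      rw [if_pos hcond]
      rw [← key i j B B' hB hrel L hend] at *
      intro h0
      exact hw (by rw [h0])
    · show revP j (revP i L) = L
      conv_lhs => rw [← hend]
      exact revP_revP i L
  · rintro ⟨l, hl⟩
    simp only [Function.mem_support] at hl
    obtain ⟨hlev, hend⟩ := (ite_ne_zero' (fun h0 => hl (by rw [h0, mul_zero]))).1
    have hcond : lev 0 (revP j l) (revP j l).length = x ∧ endPhase i (revP j l) = j := by
      constructor
      · rw [lev, List.take_of_length_le (le_refl _), revP_sum]
        rw [lev, List.take_of_length_le (le_refl _)] at hlev
        exact hlev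
      · rw [← hend]
        exact endPhase_endPhase_revP j l
    show ENNReal.ofReal (sp i) * (if lev 0 (revP j l) (revP j l).length = x ∧
          endPhase i (revP j l) = j then wE B v i (revP j l) else 0)
      = ENNReal.ofReal (sp j) *
        (if lev 0 l l.length = x ∧ endPhase j l = i then wE B' v j l else 0)
    rw [if_pos hcond, if_pos ⟨hlev, hend⟩]
    have := key j i B' B hB' hrel' l hend
    rw [this]

end Chunk6

section Chunk7
open ENNReal
variable {N : ℕ} {B : ℤ → Matrix (Fin N) (Fin N) ℝ} {v : ℝ}

theorem passE_le_one (hB : ∀ m i j, 0 ≤ B m i j)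
    (hrow : ∀ x : Fin N, HasSum (fun p : ℤ × Fin N => B p.1 x p.2) 1) (d : ℤ × Fin N)
    (hv0 : 0 < v) (hv1 : v ≤ 1) (i j : Fin N) : passE B v i j ≤ 1 := by
  rw [passE]
  apply kraft_tsum hB hrow d hv0 hv1 _ i
  intro l1 l2 h1 h2 hpre
  obtain ⟨r, rfl⟩ := hpre
  rcases eq_or_ne r [] with rfl | hr
  · rw [List.append_nil]
  · exfalso
    have hlt : l1.length < (l1 ++ r).length := by
      rw [List.length_append]
      have := List.length_pos_iff.mpr hr
      omega
    have ha := h2.1 l1.length hlt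
    rw [lev_append_left (0:ℤ) r (le_refl _)] at ha
    have hb := h1.2.1
    omega

theorem visE_le_one (hB : ∀ m i j, 0 ≤ B m i j)
    (hrow : ∀ x : Fin N, HasSum (fun p : ℤ × Fin N => B p.1 x p.2) 1) (d : ℤ × Fin N)
    (hv0 : 0 < v) (hv1 : v ≤ 1) (i j : Fin N) : visE B v i j ≤ 1 := by
  rw [visE]
  apply kraft_tsum hB hrow d hv0 hv1 _ i
  intro l1 l2 h1 h2 hpre
  obtain ⟨r, rfl⟩ := hpre
  rcases eq_or_ne r [] with rfl | hr
  · rw [List.append_nil]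
  · exfalso
    have hlt : l1.length < (l1 ++ r).length := by
      rw [List.length_append]
      have := List.length_pos_iff.mpr hr
      omega
    refine h2.1 l1.length hlt ⟨?_, ?_⟩
    · rw [lev_append_left (0:ℤ) r (le_refl _)]
      exact h1.2.1
    · rw [List.take_left]
      exact h1.2.2

set_option maxHeartbeats 1000000 in
theorem occupation_similarity' (N : ℕ) (A : ℤ → Matrix (Fin N) (Fin N) ℝ)
    (hnn : ∀ m i j, 0 ≤ A m i j)
    (hstoch : ∀ i, HasSum (fun p : ℤ × Fin N => A p.1 i p.2) 1)
    (hskip : ∀ m : ℤ, 2 ≤ m → A m = 0)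
    (sp : Fin N → ℝ) (hsppos : ∀ i, 0 < sp i) (hspsum : ∑ i, sp i = 1)
    (hstat : ∀ j, ∑ i, sp i * (∑' m : ℤ, A m i j) = sp j)
    (v : ℝ) (hv0 : 0 < v) (hv1 : v ≤ 1)
    (hLv : IsUnit (occMat A v 0)) :
    (occMat A v 0)⁻¹ * passMat A v 0 1 * occMat A v 0
      = (Matrix.diagonal sp)⁻¹ *
          (passMat (fun m => (Matrix.diagonal sp)⁻¹ * (A m)ᵀ * Matrix.diagonal sp) v 0 1)ᵀ *
          Matrix.diagonal sp := by
  classical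
  rcases Nat.eq_zero_or_pos N with hN0 | hN
  · subst hN0
    apply Matrix.ext
    intro i _
    exact i.elim0
  set D := Matrix.diagonal sp with hD
  set At := fun m => (Matrix.diagonal sp)⁻¹ * (A m)ᵀ * Matrix.diagonal sp with hAtdef
  have hDinv : (Matrix.diagonal sp)⁻¹ = Matrix.diagonal (fun i => (sp i)⁻¹) := by
    apply Matrix.inv_eq_right_inv
    rw [Matrix.diagonal_mul_diagonal]
    have : (fun i => sp i * (sp i)⁻¹) = fun _ => (1:ℝ) := by
      funext i
      exact mul_inv_cancel₀ (hsppos i).ne'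
    rw [this, Matrix.diagonal_one]
  have hAt : ∀ m x y, At m x y = (sp x)⁻¹ * A m y x * sp y := by
    intro m x y
    rw [hAtdef]
    simp only [hDinv, Matrix.mul_diagonal, Matrix.diagonal_mul, Matrix.transpose_apply]
  have hAtnn : ∀ m x y, 0 ≤ At m x y := by
    intro m x y
    rw [hAt]
    exact mul_nonneg (mul_nonneg (inv_nonneg.mpr (hsppos x).le) (hnn m y x)) (hsppos y).le
  have hAtskip : ∀ m : ℤ, 2 ≤ m → At m = 0 := by
    intro m hm
    rw [hAtdef]
    simp only [hskip m hm, Matrix.transpose_zero, Matrix.mul_zero, Matrix.zero_mul]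
  have hrel : ∀ m x y, sp x * A m x y = sp y * At m y x := by
    intro m x y
    rw [hAt m y x, ← mul_assoc, ← mul_assoc, mul_inv_cancel₀ (hsppos y).ne', one_mul]
    ring
  -- row sums of At
  have hsumA : ∀ (k j : Fin N), Summable fun m : ℤ => A m k j := by
    intro k j
    have hinj : Function.Injective (fun m : ℤ => (m, j)) :=
      fun a b hab => congrArg Prod.fst hab
    exact (hstoch k).summable.comp_injective hinj
  have hrevsum : ∀ x : Fin N, HasSum (fun p : ℤ × Fin N => sp p.2 * A p.1 p.2 x) (sp x) := by
    intro x
    have hnn2 : (0 : (ℤ × Fin N) → ℝ) ≤ fun p => sp p.2 * A p.1 p.2 x :=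
      fun p => mul_nonneg (hsppos _).le (hnn _ _ _)
    have hs1 : ∀ m : ℤ, Summable fun k : Fin N => sp k * A m k x := fun m => Summable.of_finite
    have hs2 : Summable fun m : ℤ => ∑' k : Fin N, sp k * A m k x := by
      have hsum : Summable fun m : ℤ => ∑ k : Fin N, sp k * A m k x :=
        summable_sum (fun k _ => (hsumA k x).mul_left (sp k))
      exact hsum.congr (fun m => (tsum_fintype _).symm)
    have hsummable : Summable (fun p : ℤ × Fin N => sp p.2 * A p.1 p.2 x) :=
      (summable_prod_of_nonneg hnn2).2 ⟨hs1, hs2⟩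
    have hval : ∑' p : ℤ × Fin N, sp p.2 * A p.1 p.2 x = sp x := by
      rw [Summable.tsum_prod' hsummable hs1]
      calc ∑' m : ℤ, ∑' k : Fin N, sp k * A m k x
          = ∑' m : ℤ, ∑ k : Fin N, sp k * A m k x := tsum_congr fun m => tsum_fintype _
        _ = ∑ k : Fin N, ∑' m : ℤ, sp k * A m k x :=
            Summable.tsum_finsetSum (fun k _ => (hsumA k x).mul_left (sp k))
        _ = ∑ k : Fin N, sp k * ∑' m : ℤ, A m k x := by
            apply Finset.sum_congr rfl
            intro k _
            exact tsum_mul_left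
        _ = sp x := hstat x
    rw [← hval]
    exact hsummable.hasSum
  have hstochAt : ∀ x, HasSum (fun p : ℤ × Fin N => At p.1 x p.2) 1 := by
    intro x
    have h := (hrevsum x).mul_left ((sp x)⁻¹)
    have heq : (fun p : ℤ × Fin N => (sp x)⁻¹ * (sp p.2 * A p.1 p.2 x))
        = fun p : ℤ × Fin N => At p.1 x p.2 := by
      funext p
      rw [hAt]
      ring
    rw [heq, inv_mul_cancel₀ (hsppos x).ne'] at h
    exact h
  set d : ℤ × Fin N := (0, ⟨0, hN⟩) with hd
  -- finiteness
  have hGfin : ∀ i k, passE A v i k ≠ ⊤ :=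
    fun i k => ((passE_le_one hnn hstoch d hv0 hv1 i k).trans_lt ENNReal.one_lt_top).ne
  have hGtfin : ∀ i k, passE At v i k ≠ ⊤ :=
    fun i k => ((passE_le_one hAtnn hstochAt d hv0 hv1 i k).trans_lt ENNReal.one_lt_top).ne
  have hLfin : ∀ i j, occE A v 0 i j ≠ ⊤ := by
    intro i j htop
    have hjj : occE A v 0 j j = ⊤ := by
      by_contra hne
      rw [occE_zero_decomp hnn hv0 i j] at htop
      exact ENNReal.mul_ne_top
        (((visE_le_one hnn hstoch d hv0 hv1 i j).trans_lt ENNReal.one_lt_top).ne) hne htop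
    have hcol : ∀ i', occMat A v 0 i' j = 0 := by
      intro i'
      rw [occMat_eq hnn hv0, occE_zero_decomp hnn hv0 i' j, hjj]
      rcases eq_or_ne (visE A v i' j) 0 with h0 | h0
      · rw [h0, zero_mul]
        simp
      · rw [ENNReal.mul_top h0]
        simp
    have hdet : (occMat A v 0).det = 0 := Matrix.det_eq_zero_of_column_eq_zero j hcol
    have := (Matrix.isUnit_iff_isUnit_det _).mp hLv
    rw [hdet] at this
    simp at this
  have hLtfin : ∀ j i, occE At v 0 j i ≠ ⊤ := by
    intro j i htop
    have h := occE_rev sp hsppos hnn hAtnn hrel hv0 0 i j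
    rw [htop, ENNReal.mul_top
      (by rw [ne_eq, ENNReal.ofReal_eq_zero, not_le]; exact hsppos j)] at h
    exact ENNReal.mul_ne_top ENNReal.ofReal_ne_top (hLfin i j) h
  -- real-matrix identities
  have hGL : occMat A v 1 = passMat A v 0 1 * occMat A v 0 := by
    apply Matrix.ext
    intro i j
    rw [Matrix.mul_apply, occMat_eq hnn hv0, occE_one_decomp hnn hskip hv0 i j,
      ENNReal.toReal_sum (fun k _ => ENNReal.mul_ne_top (hGfin i k) (hLfin k j))]
    apply Finset.sum_congr rfl
    intro k _
    rw [ENNReal.toReal_mul, passMat_eq hnn hv0, occMat_eq hnn hv0]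
  have hGLt : occMat At v 1 = passMat At v 0 1 * occMat At v 0 := by
    apply Matrix.ext
    intro i j
    rw [Matrix.mul_apply, occMat_eq hAtnn hv0, occE_one_decomp hAtnn hAtskip hv0 i j,
      ENNReal.toReal_sum (fun k _ => ENNReal.mul_ne_top (hGtfin i k) (hLtfin k j))]
    apply Finset.sum_congr rfl
    intro k _
    rw [ENNReal.toReal_mul, passMat_eq hAtnn hv0, occMat_eq hAtnn hv0]
  have hrev : ∀ (x : ℤ) (i j : Fin N), sp i * occMat A v x i j = sp j * occMat At v x j i := by
    intro x i j
    have h := congrArg ENNReal.toReal (occE_rev sp hsppos hnn hAtnn hrel hv0 x i j)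
    rw [ENNReal.toReal_mul, ENNReal.toReal_mul, ENNReal.toReal_ofReal (hsppos i).le,
      ENNReal.toReal_ofReal (hsppos j).le] at h
    rw [occMat_eq hnn hv0, occMat_eq hAtnn hv0]
    exact h
  have hDL : ∀ x : ℤ, D * occMat A v x = (occMat At v x)ᵀ * D := by
    intro x
    apply Matrix.ext
    intro i j
    rw [hD, Matrix.diagonal_mul, Matrix.mul_diagonal, Matrix.transpose_apply]
    exact (hrev x i j).trans (mul_comm _ _)
  -- matrix algebra
  have hDdet : IsUnit D.det := by
    rw [hD, Matrix.det_diagonal, isUnit_iff_ne_zero]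
    exact Finset.prod_ne_zero_iff.mpr (fun i _ => (hsppos i).ne')
  have hDD : D⁻¹ * D = 1 := Matrix.nonsing_inv_mul D hDdet
  have hDD' : D * D⁻¹ = 1 := Matrix.mul_nonsing_inv D hDdet
  have hLdet : IsUnit (occMat A v 0).det := (Matrix.isUnit_iff_isUnit_det _).mp hLv
  have hLL : (occMat A v 0)⁻¹ * occMat A v 0 = 1 := Matrix.nonsing_inv_mul _ hLdet
  have e1 : (occMat At v 0)ᵀ = D * occMat A v 0 * D⁻¹ := by
    rw [hDL 0, Matrix.mul_assoc, hDD', Matrix.mul_one]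
  have hchain : D * (passMat A v 0 1 * occMat A v 0)
      = D * (occMat A v 0 * (D⁻¹ * (passMat At v 0 1)ᵀ * D)) := by
    calc D * (passMat A v 0 1 * occMat A v 0) = D * occMat A v 1 := by rw [← hGL]
      _ = (occMat At v 1)ᵀ * D := hDL 1
      _ = (passMat At v 0 1 * occMat At v 0)ᵀ * D := by rw [← hGLt]
      _ = (occMat At v 0)ᵀ * (passMat At v 0 1)ᵀ * D := by rw [Matrix.transpose_mul]
      _ = D * occMat A v 0 * D⁻¹ * (passMat At v 0 1)ᵀ * D := by rw [e1]
      _ = D * (occMat A v 0 * (D⁻¹ * (passMat At v 0 1)ᵀ * D)) := by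
          simp only [Matrix.mul_assoc]
  have hmain : passMat A v 0 1 * occMat A v 0
      = occMat A v 0 * (D⁻¹ * (passMat At v 0 1)ᵀ * D) := by
    have h := congrArg (fun M => D⁻¹ * M) hchain
    simpa only [← Matrix.mul_assoc, hDD, Matrix.one_mul] using h
  calc (occMat A v 0)⁻¹ * passMat A v 0 1 * occMat A v 0
      = (occMat A v 0)⁻¹ * (passMat A v 0 1 * occMat A v 0) := by
        rw [Matrix.mul_assoc]
    _ = (occMat A v 0)⁻¹ * (occMat A v 0 * (D⁻¹ * (passMat At v 0 1)ᵀ * D)) := by rw [hmain]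
    _ = ((occMat A v 0)⁻¹ * occMat A v 0) * (D⁻¹ * (passMat At v 0 1)ᵀ * D) := by
        rw [← Matrix.mul_assoc]
    _ = D⁻¹ * (passMat At v 0 1)ᵀ * D := by rw [hLL, Matrix.one_mul]

end Chunk7


/-- With `L_v = L_v(0,∞)` invertible, `G_v` the first passage matrix, and
`R_v = diag(sp)⁻¹ G̃_vᵀ diag(sp)` its time-reversed counterpart (with
`Ã_m = diag(sp)⁻¹ A_mᵀ diag(sp)`), the similarity relation `L_v⁻¹ G_v L_v = R_v` holds. -/
theorem occupation_similarity (N : ℕ) (A : ℤ → Matrix (Fin N) (Fin N) ℝ)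
    (hnn : ∀ m i j, 0 ≤ A m i j)
    (hstoch : ∀ i, HasSum (fun p : ℤ × Fin N => A p.1 i p.2) 1)
    (hskip : ∀ m : ℤ, 2 ≤ m → A m = 0)
    (sp : Fin N → ℝ) (hsppos : ∀ i, 0 < sp i) (hspsum : ∑ i, sp i = 1)
    (hstat : ∀ j, ∑ i, sp i * (∑' m : ℤ, A m i j) = sp j)
    (v : ℝ) (hv0 : 0 < v) (hv1 : v ≤ 1)
    (hLv : IsUnit (occMat A v 0)) :
    (occMat A v 0)⁻¹ * passMat A v 0 1 * occMat A v 0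
      = (Matrix.diagonal sp)⁻¹ *
          (passMat (fun m => (Matrix.diagonal sp)⁻¹ * (A m)ᵀ * Matrix.diagonal sp) v 0 1)ᵀ *
          Matrix.diagonal sp :=
  occupation_similarity' N A hnn hstoch hskip sp hsppos hspsum hstat v hv0 hv1 hLv
end

section
/- For the dual risk process Û with initial capital u ∈ N, the Gerber–Shiu matrix equals G_v^u: Ê(v^{τ̂_0} 1{τ̂_0 < ∞, J_{τ̂_0} = j} | J_0 = i, Û_0 = u) = (G_v^u)_{ij}, and hence the unconditional Gerber–Shiu function is φ̂(u) = α^T G_v^u e. -/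
open scoped Classical Matrix

/-- Probability of a finite trajectory of claim-size/phase pairs of the Markov-modulated risk
model with claim mass matrices `Λ`, started in phase `i`. -/
noncomputable def claimProb {N : ℕ} (Λ : ℕ → Matrix (Fin N) (Fin N) ℝ) :
    Fin N → List (ℕ × Fin N) → ℝ
  | _, [] => 1
  | i, (m, j) :: rest => Λ m i j * claimProb Λ j rest

/-- The phase at the end of a claim trajectory started in phase `i`. -/
noncomputable def cEndPhase {N : ℕ} (i : Fin N) (l : List (ℕ × Fin N)) : Fin N :=
  l.foldl (fun _ p => p.2) i

/-- The surplus `U_k = u + k - Σ_{i≤k} Z_i` of the risk process after `k` periods along the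
claim trajectory `l`, with initial reserve `u`. -/
noncomputable def ulev {N : ℕ} (u : ℤ) (l : List (ℕ × Fin N)) (k : ℕ) : ℤ :=
  u + k - ((l.take k).map fun p => (p.1 : ℤ)).sum

/-- The increment matrices of the MAC associated with the risk process: `A_m = Λ(1-m)` for
`m ≤ 1` and `A_m = 0` for `m ≥ 2`. -/
noncomputable def Amat {N : ℕ} (Λ : ℕ → Matrix (Fin N) (Fin N) ℝ) :
    ℤ → Matrix (Fin N) (Fin N) ℝ :=
  fun m => if m ≤ 1 then Λ (1 - m).toNat else 0

/-- The surplus of the dual risk process `Û_k = u - k + Σ_{i≤k} Z_i` after `k` periods. -/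
noncomputable def dlev {N : ℕ} (u : ℤ) (l : List (ℕ × Fin N)) (k : ℕ) : ℤ :=
  u - k + ((l.take k).map fun p => (p.1 : ℤ)).sum

/-- The Gerber–Shiu matrix of the dual risk process: `(i,j)` entry
`E[v^{τ̂_0} 1{τ̂_0 < ∞, J_{τ̂_0} = j} | J_0 = i, Û_0 = u]`. -/
noncomputable def dualGS {N : ℕ} (Λ : ℕ → Matrix (Fin N) (Fin N) ℝ) (v : ℝ) (u : ℤ) :
    Matrix (Fin N) (Fin N) ℝ :=
  Matrix.of fun i j => ∑' l : List (ℕ × Fin N),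
    if (∀ k < l.length, 0 < dlev u l k) ∧ dlev u l l.length ≤ 0 ∧ cEndPhase i l = j
    then v ^ l.length * claimProb Λ i l else 0

open scoped ENNReal

namespace GSaux

variable {N : ℕ}

/-- ENNReal path probability. -/
noncomputable def ppE (A : ℤ → Matrix (Fin N) (Fin N) ℝ) :
    Fin N → List (ℤ × Fin N) → ℝ≥0∞
  | _, [] => 1
  | i, (m, j) :: rest => ENNReal.ofReal (A m i j) * ppE A j rest

lemma ofReal_pathProb (A : ℤ → Matrix (Fin N) (Fin N) ℝ)
    (hnn : ∀ m i j, 0 ≤ A m i j) : ∀ (i : Fin N) (l : List (ℤ × Fin N)),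
    ENNReal.ofReal (pathProb A i l) = ppE A i l
  | i, [] => by simp [pathProb, ppE]
  | i, (m, j) :: rest => by
      rw [pathProb, ppE, ENNReal.ofReal_mul (hnn m i j), ofReal_pathProb A hnn j rest]

lemma pathProb_nonneg (A : ℤ → Matrix (Fin N) (Fin N) ℝ)
    (hnn : ∀ m i j, 0 ≤ A m i j) : ∀ (i : Fin N) (l : List (ℤ × Fin N)),
    0 ≤ pathProb A i l
  | i, [] => by simp [pathProb]
  | i, (m, j) :: rest => mul_nonneg (hnn m i j) (pathProb_nonneg A hnn j rest)

lemma pathProb_eq_zero (A : ℤ → Matrix (Fin N) (Fin N) ℝ)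
    (hA1 : ∀ m : ℤ, 1 < m → A m = 0) : ∀ (i : Fin N) (l : List (ℤ × Fin N)),
    (∃ p ∈ l, 1 < p.1) → pathProb A i l = 0
  | i, [], h => by simp at h
  | i, (m, j) :: rest, h => by
      rcases h with ⟨p, hp, hp1⟩
      rcases List.mem_cons.1 hp with rfl | hp
      · simp [pathProb, hA1 _ hp1]
      · rw [pathProb, pathProb_eq_zero A hA1 j rest ⟨p, hp, hp1⟩, mul_zero]

lemma ppE_ne_top (A : ℤ → Matrix (Fin N) (Fin N) ℝ) :
    ∀ (i : Fin N) (l : List (ℤ × Fin N)), ppE A i l ≠ ∞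
  | i, [] => by simp [ppE]
  | i, (m, j) :: rest =>
      ENNReal.mul_ne_top ENNReal.ofReal_ne_top (ppE_ne_top A j rest)

lemma ppE_small (A : ℤ → Matrix (Fin N) (Fin N) ℝ)
    (hA1 : ∀ m : ℤ, 1 < m → A m = 0) : ∀ (i : Fin N) (l : List (ℤ × Fin N)),
    ppE A i l ≠ 0 → ∀ p ∈ l, p.1 ≤ 1
  | i, [], h => by simp
  | i, (m, j) :: rest, h => by
      rw [ppE, mul_ne_zero_iff] at h
      intro p hp
      rcases List.mem_cons.1 hp with rfl | hp
      · by_contra hc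
        rw [hA1 _ (by omega)] at h
        simp at h
      · exact ppE_small A hA1 j rest h.2 p hp

lemma ppE_append (A : ℤ → Matrix (Fin N) (Fin N) ℝ) :
    ∀ (i : Fin N) (l1 l2 : List (ℤ × Fin N)),
    ppE A i (l1 ++ l2) = ppE A i l1 * ppE A (endPhase i l1) l2
  | i, [], l2 => by simp [ppE, endPhase]
  | i, (m, j) :: rest, l2 => by
      rw [List.cons_append, ppE, ppE, ppE_append A j rest l2, mul_assoc]
      rfl

lemma endPhase_append (i : Fin N) (l1 l2 : List (ℤ × Fin N)) :
    endPhase i (l1 ++ l2) = endPhase (endPhase i l1) l2 := by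
  simp [endPhase, List.foldl_append]

lemma endPhase_nil (i : Fin N) : endPhase i ([] : List (ℤ × Fin N)) = i := rfl

lemma lev_zero (x : ℤ) (l : List (ℤ × Fin N)) : lev x l 0 = x := by simp [lev]

lemma lev_nil (x : ℤ) (k : ℕ) : lev x ([] : List (ℤ × Fin N)) k = x := by simp [lev]

lemma lev_take (x : ℤ) (l : List (ℤ × Fin N)) {k m : ℕ} (h : k ≤ m) :
    lev x (l.take m) k = lev x l k := by
  simp [lev, List.take_take, Nat.min_eq_left h]

lemma lev_append_left (x : ℤ) (l1 l2 : List (ℤ × Fin N)) {k : ℕ} (h : k ≤ l1.length) :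
    lev x (l1 ++ l2) k = lev x l1 k := by
  simp [lev, List.take_append_of_le_length h]

lemma lev_append_right (x : ℤ) (l1 l2 : List (ℤ × Fin N)) (k : ℕ) :
    lev x (l1 ++ l2) (l1.length + k) = lev (lev x l1 l1.length) l2 k := by
  simp only [lev, List.take_append, List.map_append, List.sum_append, List.take_length, add_assoc,
    List.take_of_length_le, Nat.le_add_right, Nat.add_sub_cancel_left]

lemma lev_succ (x : ℤ) (l : List (ℤ × Fin N)) {k : ℕ} (hk : k < l.length) :
    lev x l (k + 1) = lev x l k + (l.get ⟨k, hk⟩).1 := by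
  simp only [lev, List.take_succ, List.getElem?_eq_getElem hk, Option.toList_some,
    List.map_append, List.sum_append, List.map_cons, List.map_nil, List.sum_cons,
    List.sum_nil, add_zero, List.get_eq_getElem, add_assoc]

lemma lev_succ_le (x : ℤ) (l : List (ℤ × Fin N)) {k : ℕ} (hk : k < l.length)
    (hinc : ∀ p ∈ l, p.1 ≤ 1) : lev x l (k + 1) ≤ lev x l k + 1 := by
  rw [lev_succ x l hk]
  have := hinc (l.get ⟨k, hk⟩) (List.get_mem l ⟨k, hk⟩)
  omega

lemma lev_hit (x : ℤ) (l : List (ℤ × Fin N)) {k : ℕ} {a : ℤ} (hk : k < l.length)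
    (hinc : ∀ p ∈ l, p.1 ≤ 1) (h1 : lev x l k < a) (h2 : a ≤ lev x l (k + 1)) :
    lev x l (k + 1) = a := by
  have := lev_succ_le x l hk hinc
  omega

end GSaux

namespace GSaux

variable {N : ℕ}

lemma tsum_cons (F : List (ℤ × Fin N) → ℝ≥0∞) (h0 : F [] = 0) :
    ∑' l, F l = ∑' x : (ℤ × Fin N) × List (ℤ × Fin N), F (x.1 :: x.2) := by
  refine (Function.Injective.tsum_eq ?_ ?_).symm
  · intro a b h
    rcases a with ⟨a1, a2⟩; rcases b with ⟨b1, b2⟩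
    simpa [Prod.ext_iff] using h
  · intro l hl
    cases l with
    | nil => simp [Function.mem_support, h0] at hl
    | cons p t => exact ⟨(p, t), rfl⟩

lemma tsum_len (A : ℤ → Matrix (Fin N) (Fin N) ℝ)
    (hrowE : ∀ i, ∑' p : ℤ × Fin N, ENNReal.ofReal (A p.1 i p.2) = 1) :
    ∀ (n : ℕ) (i : Fin N),
    ∑' l : List (ℤ × Fin N), (if l.length = n then ppE A i l else 0) = 1
  | 0, i => by
      rw [tsum_eq_single ([] : List (ℤ × Fin N))]
      · simp [ppE]
      · intro l hl
        rw [if_neg]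
        simpa using fun h => hl (List.length_eq_zero_iff.1 h)
  | n + 1, i => by
      rw [tsum_cons _ (by simp)]
      have hc : ∀ x : (ℤ × Fin N) × List (ℤ × Fin N),
          (if (x.1 :: x.2 : List (ℤ × Fin N)).length = n + 1 then ppE A i (x.1 :: x.2) else 0)
          = ENNReal.ofReal (A x.1.1 i x.1.2) *
            (if x.2.length = n then ppE A x.1.2 x.2 else 0) := by
        rintro ⟨⟨m, j⟩, t⟩
        by_cases h : t.length = n <;> simp [ppE, h]
      rw [tsum_congr hc]
      rw [show (∑' (b : (ℤ × Fin N) × List (ℤ × Fin N)),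
            ENNReal.ofReal (A b.1.1 i b.1.2) * if b.2.length = n then ppE A b.1.2 b.2 else 0)
          = ∑' (p : ℤ × Fin N), ∑' (t : List (ℤ × Fin N)),
            ENNReal.ofReal (A p.1 i p.2) * if t.length = n then ppE A p.2 t else 0
          from ENNReal.tsum_prod (f := fun (p : ℤ × Fin N) (t : List (ℤ × Fin N)) =>
            ENNReal.ofReal (A p.1 i p.2) * if t.length = n then ppE A p.2 t else 0)]
      have : ∀ p : ℤ × Fin N,
          ∑' t : List (ℤ × Fin N), ENNReal.ofReal (A p.1 i p.2) *
            (if t.length = n then ppE A p.2 t else 0) = ENNReal.ofReal (A p.1 i p.2) := by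
        intro p
        rw [ENNReal.tsum_mul_left, tsum_len A hrowE n p.2, mul_one]
      rw [tsum_congr this, hrowE i]

/-- first passage condition. -/
def fpC {N : ℕ} (a : ℤ) (i j : Fin N) (l : List (ℤ × Fin N)) : Prop :=
  (∀ k < l.length, lev 0 l k < a) ∧ a ≤ lev 0 l l.length ∧ endPhase i l = j

noncomputable def fpF (A : ℤ → Matrix (Fin N) (Fin N) ℝ) (v : ℝ) (a : ℤ) (i j : Fin N)
    (l : List (ℤ × Fin N)) : ℝ≥0∞ :=
  if fpC a i j l then ENNReal.ofReal v ^ l.length * ppE A i l else 0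

noncomputable def fpE (A : ℤ → Matrix (Fin N) (Fin N) ℝ) (v : ℝ) (a : ℤ) (i j : Fin N) :
    ℝ≥0∞ := ∑' l, fpF A v a i j l

lemma fp_prefix_eq {a : ℤ} {l1 l1' t t' : List (ℤ × Fin N)}
    (h1 : (∀ k < l1.length, lev 0 l1 k < a) ∧ a ≤ lev 0 l1 l1.length)
    (h1' : (∀ k < l1'.length, lev 0 l1' k < a) ∧ a ≤ lev 0 l1' l1'.length)
    (heq : l1 ++ t = l1' ++ t') : l1 = l1' ∧ t = t' := by
  have key : ∀ (m1 m1' s s' : List (ℤ × Fin N)),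
      ((∀ k < m1.length, lev 0 m1 k < a) ∧ a ≤ lev 0 m1 m1.length) →
      ((∀ k < m1'.length, lev 0 m1' k < a) ∧ a ≤ lev 0 m1' m1'.length) →
      m1 ++ s = m1' ++ s' → ¬ m1.length < m1'.length := by
    intro m1 m1' s s' hm hm' he hlt
    have e1 : lev 0 m1' m1.length < a := hm'.1 _ hlt
    have e2 : lev 0 (m1' ++ s') m1.length = lev 0 m1' m1.length :=
      lev_append_left _ _ _ (le_of_lt hlt)
    have e3 : lev 0 (m1 ++ s) m1.length = lev 0 m1 m1.length :=
      lev_append_left _ _ _ le_rfl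
    rw [he, e2] at e3
    have := hm.2
    omega
  have hlen : l1.length = l1'.length := by
    rcases Nat.lt_trichotomy l1.length l1'.length with h | h | h
    · exact absurd h (key l1 l1' t t' h1 h1' heq)
    · exact h
    · exact absurd h (key l1' l1 t' t h1' h1 heq.symm)
  exact List.append_inj heq hlen

lemma fpE_le_one (A : ℤ → Matrix (Fin N) (Fin N) ℝ)
    (hrowE : ∀ i, ∑' p : ℤ × Fin N, ENNReal.ofReal (A p.1 i p.2) = 1)
    {v : ℝ} (hv1 : v ≤ 1) (a : ℤ) (i j : Fin N) : fpE A v a i j ≤ 1 := by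
  have step1 : fpE A v a i j ≤ ∑' l, (if fpC a i j l then ppE A i l else 0) := by
    refine ENNReal.tsum_le_tsum fun l => ?_
    unfold fpF
    split
    · calc ENNReal.ofReal v ^ l.length * ppE A i l
          ≤ 1 * ppE A i l :=
            mul_le_mul_left (pow_le_one' (ENNReal.ofReal_le_one.2 hv1) _) _
        _ = ppE A i l := one_mul _
    · exact zero_le
  refine step1.trans ?_
  rw [ENNReal.tsum_eq_iSup_sum]
  refine iSup_le fun S => ?_
  rw [← Finset.sum_filter]
  set S' := S.filter (fun l => fpC a i j l) with hS'
  set n := S'.sup List.length with hn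
  have hmem : ∀ l ∈ S', fpC a i j l := by
    intro l hl
    exact (Finset.mem_filter.1 hl).2
  have hext : ∀ l ∈ S', ppE A i l
      = ∑' l2 : List (ℤ × Fin N),
          (if l2.length = n - l.length then ppE A i (l ++ l2) else 0) := by
    intro l _
    have hc : ∀ l2 : List (ℤ × Fin N),
        (if l2.length = n - l.length then ppE A i (l ++ l2) else 0)
        = ppE A i l * (if l2.length = n - l.length then ppE A (endPhase i l) l2 else 0) := by
      intro l2
      by_cases h : l2.length = n - l.length <;> simp [h, ppE_append]
    rw [tsum_congr hc, ENNReal.tsum_mul_left, tsum_len A hrowE, mul_one]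
  have hsub : ∀ l : List (ℤ × Fin N),
      ∑' l2 : List (ℤ × Fin N),
          (if l2.length = n - l.length then ppE A i (l ++ l2) else 0)
      = ∑' l2 : {l2 : List (ℤ × Fin N) // l2.length = n - l.length}, ppE A i (l ++ l2.1) := by
    intro l
    refine Eq.symm ((tsum_subtype {l2 : List (ℤ × Fin N) | l2.length = n - l.length}
      (fun l2 => ppE A i (l ++ l2))).trans ?_)
    refine tsum_congr fun l2 => ?_
    by_cases h : l2.length = n - l.length <;>
      simp [Set.indicator_apply, Set.mem_setOf_eq, h]
  calc ∑ l ∈ S', ppE A i l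
      = ∑' (l : {x // x ∈ S'}),
          ∑' l2 : {l2 : List (ℤ × Fin N) // l2.length = n - l.1.length},
            ppE A i (l.1 ++ l2.1) := by
        rw [← Finset.tsum_subtype S' (fun l => ppE A i l)]
        refine tsum_congr fun l => ?_
        rw [hext l.1 l.2, hsub l.1]
    _ = ∑' (x : Σ l : {x // x ∈ S'},
          {l2 : List (ℤ × Fin N) // l2.length = n - l.1.length}),
            ppE A i (x.1.1 ++ x.2.1) := (ENNReal.tsum_sigma _).symm
    _ ≤ ∑' l' : List (ℤ × Fin N), (if l'.length = n then ppE A i l' else 0) := by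
        have hval : ∀ x : Σ l : {x // x ∈ S'},
            {l2 : List (ℤ × Fin N) // l2.length = n - l.1.length},
            ppE A i (x.1.1 ++ x.2.1)
            = (fun l' => if l'.length = n then ppE A i l' else 0) (x.1.1 ++ x.2.1) := by
          rintro ⟨⟨l, hl⟩, ⟨l2, hl2⟩⟩
          have hle : l.length ≤ n := Finset.le_sup (f := List.length) hl
          have : (l ++ l2).length = n := by
            simp only [List.length_append, hl2]
            omega
          simp [this]
        rw [tsum_congr hval]
        refine ENNReal.tsum_comp_le_tsum_of_injective ?_ _
        rintro ⟨⟨l, hl⟩, ⟨l2, hl2⟩⟩ ⟨⟨l', hl'⟩, ⟨l2', hl2'⟩⟩ he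
        simp only at he
        obtain ⟨e1, e2⟩ := fp_prefix_eq
          ⟨(hmem l hl).1, (hmem l hl).2.1⟩ ⟨(hmem l' hl').1, (hmem l' hl').2.1⟩ he
        subst e1; subst e2; rfl
    _ = 1 := tsum_len A hrowE n i

end GSaux

namespace GSaux

variable {N : ℕ}

lemma lev_shift (x : ℤ) (l : List (ℤ × Fin N)) (k : ℕ) :
    lev x l k = x + lev 0 l k := by simp [lev]

lemma append_fp (n : ℕ) {l1 l2 : List (ℤ × Fin N)}
    (hinc1 : ∀ p ∈ l1, p.1 ≤ 1)
    (h1 : (∀ k < l1.length, lev 0 l1 k < 1) ∧ 1 ≤ lev 0 l1 l1.length)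
    (h2 : (∀ k < l2.length, lev 0 l2 k < (n : ℤ)) ∧ (n : ℤ) ≤ lev 0 l2 l2.length) :
    (∀ k < (l1 ++ l2).length, lev 0 (l1 ++ l2) k < (n : ℤ) + 1) ∧
      (n : ℤ) + 1 ≤ lev 0 (l1 ++ l2) (l1 ++ l2).length := by
  have hne : l1.length ≠ 0 := by
    intro h0
    have h2' := h1.2
    rw [List.length_eq_zero_iff.1 h0] at h2'
    rw [lev_nil] at h2'
    omega
  have hT : lev 0 l1 l1.length = 1 := by
    have hk : l1.length - 1 < l1.length := by omega
    have heq : l1.length - 1 + 1 = l1.length := by omega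
    have := lev_hit 0 l1 hk hinc1 (h1.1 _ hk) (by rw [heq]; exact h1.2)
    rwa [heq] at this
  constructor
  · intro k hk
    rcases Nat.lt_or_ge k l1.length with h | h
    · rw [lev_append_left _ _ _ (le_of_lt h)]
      have := h1.1 k h; omega
    · obtain ⟨k', rfl⟩ : ∃ k', k = l1.length + k' := ⟨k - l1.length, by omega⟩
      rw [lev_append_right, hT, lev_shift]
      have hk' : k' < l2.length := by
        rw [List.length_append] at hk; omega
      have := h2.1 k' hk'
      omega
  · rw [List.length_append, lev_append_right, hT, lev_shift]
    have := h2.2; omega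

lemma fp_decomp (n : ℕ) {l : List (ℤ × Fin N)} (hinc : ∀ p ∈ l, p.1 ≤ 1)
    (h : (∀ k < l.length, lev 0 l k < (n : ℤ) + 1) ∧ (n : ℤ) + 1 ≤ lev 0 l l.length) :
    ∃ l1 l2, l = l1 ++ l2 ∧
      ((∀ k < l1.length, lev 0 l1 k < 1) ∧ 1 ≤ lev 0 l1 l1.length) ∧
      ((∀ k < l2.length, lev 0 l2 k < (n : ℤ)) ∧ (n : ℤ) ≤ lev 0 l2 l2.length) := by
  classical
  have hex : ∃ k, 1 ≤ lev 0 l k := ⟨l.length, by have := h.2; omega⟩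
  set T := Nat.find hex with hTdef
  have hPT : 1 ≤ lev 0 l T := Nat.find_spec hex
  have hmin : ∀ k < T, lev 0 l k < 1 := fun k hk => by
    have := Nat.find_min hex hk; omega
  have hT0 : 0 < T := by
    rcases Nat.eq_zero_or_pos T with h0 | h0
    · rw [h0, lev_zero] at hPT; omega
    · exact h0
  have hTle : T ≤ l.length := by
    by_contra hc
    push_neg at hc
    have := hmin l.length hc
    have := h.2
    omega
  have hTlev : lev 0 l T = 1 := by
    have hk : T - 1 < l.length := by omega
    have heq : T - 1 + 1 = T := by omega
    have := lev_hit 0 l hk hinc (hmin _ (by omega)) (by rw [heq]; exact hPT)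
    rwa [heq] at this
  have hlen1 : (l.take T).length = T := by
    rw [List.length_take]; omega
  have key : ∀ k, lev 0 l (T + k) = 1 + lev 0 (l.drop T) k := by
    intro k
    have h0 := lev_append_right 0 (l.take T) (l.drop T) k
    rw [List.take_append_drop, hlen1, lev_take 0 l (le_refl T), hTlev,
      lev_shift 1 (l.drop T) k] at h0
    exact h0
  refine ⟨l.take T, l.drop T, (List.take_append_drop T l).symm, ⟨?_, ?_⟩, ⟨?_, ?_⟩⟩
  · intro k hk
    rw [hlen1] at hk
    rw [lev_take 0 l (le_of_lt hk)]
    exact hmin k hk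
  · rw [hlen1, lev_take 0 l (le_refl T), hTlev]
  · intro k hk
    rw [List.length_drop] at hk
    have h1 := h.1 (T + k) (by omega)
    rw [key k] at h1
    omega
  · rw [List.length_drop]
    have h1 := h.2
    have h2 := key (l.length - T)
    rw [show T + (l.length - T) = l.length by omega] at h2
    omega

lemma fpE_succ (A : ℤ → Matrix (Fin N) (Fin N) ℝ) (hA1 : ∀ m : ℤ, 1 < m → A m = 0)
    (v : ℝ) (n : ℕ) (i j : Fin N) :
    fpE A v ((n : ℤ) + 1) i j = ∑ k, fpE A v 1 i k * fpE A v (n : ℤ) k j := by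
  classical
  set vE := ENNReal.ofReal v with hvE
  set ψ : List (ℤ × Fin N) × List (ℤ × Fin N) → ℝ≥0∞ := fun x =>
    if ((∀ k < x.1.length, lev 0 x.1 k < 1) ∧ 1 ≤ lev 0 x.1 x.1.length) ∧
       ((∀ k < x.2.length, lev 0 x.2 k < (n : ℤ)) ∧ (n : ℤ) ≤ lev 0 x.2 x.2.length) ∧
       endPhase (endPhase i x.1) x.2 = j
    then (vE ^ x.1.length * ppE A i x.1) * (vE ^ x.2.length * ppE A (endPhase i x.1) x.2)
    else 0 with hψdef
  have hψ_ne : ∀ x : List (ℤ × Fin N) × List (ℤ × Fin N), ψ x ≠ 0 →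
      (((∀ k < x.1.length, lev 0 x.1 k < 1) ∧ 1 ≤ lev 0 x.1 x.1.length) ∧
       ((∀ k < x.2.length, lev 0 x.2 k < (n : ℤ)) ∧ (n : ℤ) ≤ lev 0 x.2 x.2.length) ∧
       endPhase (endPhase i x.1) x.2 = j) ∧
      ppE A i x.1 ≠ 0 ∧ ppE A (endPhase i x.1) x.2 ≠ 0 := by
    intro x hx
    by_cases hcond : ((∀ k < x.1.length, lev 0 x.1 k < 1) ∧ 1 ≤ lev 0 x.1 x.1.length) ∧
       ((∀ k < x.2.length, lev 0 x.2 k < (n : ℤ)) ∧ (n : ℤ) ≤ lev 0 x.2 x.2.length) ∧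
       endPhase (endPhase i x.1) x.2 = j
    · refine ⟨hcond, ?_, ?_⟩
      · rw [hψdef] at hx
        simp only [if_pos hcond] at hx
        intro h0; apply hx; rw [h0]; ring
      · rw [hψdef] at hx
        simp only [if_pos hcond] at hx
        intro h0; apply hx; rw [h0]; ring
    · exfalso; apply hx; rw [hψdef]; simp only [if_neg hcond]
  have main : fpE A v ((n : ℤ) + 1) i j = ∑' x, ψ x := by
    refine tsum_eq_tsum_of_ne_zero_bij (fun x => x.1.1 ++ x.1.2) ?_ ?_ ?_
    · rintro ⟨⟨x1, x2⟩, hx⟩ ⟨⟨y1, y2⟩, hy⟩ he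
      simp only at he
      obtain ⟨hcx, _, _⟩ := hψ_ne _ hx
      obtain ⟨hcy, _, _⟩ := hψ_ne _ hy
      obtain ⟨e1, e2⟩ := fp_prefix_eq hcx.1 hcy.1 he
      subst e1; subst e2; rfl
    · intro l hl
      rw [Function.mem_support, fpF] at hl
      split at hl
      case isFalse => exact absurd rfl hl
      case isTrue hcond =>
        have hpp : ppE A i l ≠ 0 := fun h0 => hl (by rw [h0, mul_zero])
        have hvp : vE ^ l.length ≠ 0 := fun h0 => hl (by rw [h0, zero_mul])
        have hinc := ppE_small A hA1 i l hpp
        obtain ⟨l1, l2, hsplit, c1, c2⟩ :=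
          fp_decomp n hinc ⟨hcond.1, hcond.2.1⟩
        have hval : ψ (l1, l2) = vE ^ l.length * ppE A i l := by
          rw [hψdef]
          simp only
          rw [if_pos ⟨c1, c2, by rw [← endPhase_append, ← hsplit]; exact hcond.2.2⟩]
          rw [hsplit, ppE_append, List.length_append, pow_add]
          ring
        refine ⟨⟨(l1, l2), ?_⟩, ?_⟩
        · rw [Function.mem_support, hval]
          exact fun h0 => hl h0
        · simp only
          exact hsplit.symm
    · rintro ⟨⟨x1, x2⟩, hx⟩
      obtain ⟨⟨c1, c2, cend⟩, hp1, hp2⟩ := hψ_ne _ hx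
      have hinc1 := ppE_small A hA1 i x1 hp1
      have hfp := append_fp n hinc1 c1 c2
      simp only [fpF]
      rw [if_pos (show fpC ((n : ℤ) + 1) i j (x1 ++ x2) from
        ⟨hfp.1, hfp.2, by rw [endPhase_append]; exact cend⟩)]
      rw [hψdef]
      simp only
      rw [if_pos ⟨c1, c2, cend⟩, ppE_append, List.length_append, pow_add]
      ring
  rw [main]
  have hprod : ∀ k, fpE A v 1 i k * fpE A v (n : ℤ) k j
      = ∑' x : List (ℤ × Fin N) × List (ℤ × Fin N),
          fpF A v 1 i k x.1 * fpF A v (n : ℤ) k j x.2 := by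
    intro k
    calc fpE A v 1 i k * fpE A v (n : ℤ) k j
        = ∑' l1, fpF A v 1 i k l1 * fpE A v (n : ℤ) k j := ENNReal.tsum_mul_right.symm
      _ = ∑' l1, ∑' l2, fpF A v 1 i k l1 * fpF A v (n : ℤ) k j l2 :=
          tsum_congr fun l1 => ENNReal.tsum_mul_left.symm
      _ = ∑' x : List (ℤ × Fin N) × List (ℤ × Fin N),
            fpF A v 1 i k x.1 * fpF A v (n : ℤ) k j x.2 :=
          (ENNReal.tsum_prod (f := fun l1 l2 =>
            fpF A v 1 i k l1 * fpF A v (n : ℤ) k j l2)).symm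
  calc (∑' x, ψ x)
      = ∑' x : List (ℤ × Fin N) × List (ℤ × Fin N),
          ∑ k, fpF A v 1 i k x.1 * fpF A v (n : ℤ) k j x.2 := by
        refine tsum_congr fun x => ?_
        rw [Finset.sum_eq_single (endPhase i x.1)]
        · simp only [hψdef]
          by_cases hA : (∀ k < x.1.length, lev 0 x.1 k < 1) ∧ 1 ≤ lev 0 x.1 x.1.length
          · by_cases hB : ((∀ k < x.2.length, lev 0 x.2 k < (n : ℤ)) ∧
                (n : ℤ) ≤ lev 0 x.2 x.2.length) ∧ endPhase (endPhase i x.1) x.2 = j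
            · have e1 : fpF A v 1 i (endPhase i x.1) x.1
                  = vE ^ x.1.length * ppE A i x.1 := by
                simp only [fpF]
                exact if_pos ⟨hA.1, hA.2, rfl⟩
              have e2 : fpF A v (n : ℤ) (endPhase i x.1) j x.2
                  = vE ^ x.2.length * ppE A (endPhase i x.1) x.2 := by
                simp only [fpF]
                exact if_pos ⟨hB.1.1, hB.1.2, hB.2⟩
              rw [if_pos ⟨hA, hB.1, hB.2⟩, e1, e2]
            · have e2 : fpF A v (n : ℤ) (endPhase i x.1) j x.2 = 0 := by
                simp only [fpF]
                exact if_neg (fun hc : fpC (n : ℤ) (endPhase i x.1) j x.2 =>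
                  hB ⟨⟨hc.1, hc.2.1⟩, hc.2.2⟩)
              rw [if_neg (fun hc => hB ⟨hc.2.1, hc.2.2⟩), e2, mul_zero]
          · have e1 : fpF A v 1 i (endPhase i x.1) x.1 = 0 := by
              simp only [fpF]
              exact if_neg (fun hc : fpC 1 i (endPhase i x.1) x.1 =>
                hA ⟨hc.1, hc.2.1⟩)
            rw [if_neg (fun hc => hA hc.1), e1, zero_mul]
        · intro b _ hb
          have e1 : fpF A v 1 i b x.1 = 0 := by
            simp only [fpF]
            exact if_neg (fun hc : fpC 1 i b x.1 => hb (hc.2.2.symm ▸ rfl))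
          rw [e1, zero_mul]
        · intro habs
          exact absurd (Finset.mem_univ _) habs
    _ = ∑ k, ∑' x : List (ℤ × Fin N) × List (ℤ × Fin N),
          fpF A v 1 i k x.1 * fpF A v (n : ℤ) k j x.2 :=
        Summable.tsum_finsetSum fun k _ => ENNReal.summable
    _ = ∑ k, fpE A v 1 i k * fpE A v (n : ℤ) k j :=
        Finset.sum_congr rfl fun k _ => (hprod k).symm

end GSaux

namespace GSaux

variable {N : ℕ}

lemma fpF_ne_top (A : ℤ → Matrix (Fin N) (Fin N) ℝ) (v : ℝ) (a : ℤ) (i j : Fin N)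
    (l : List (ℤ × Fin N)) : fpF A v a i j l ≠ ∞ := by
  unfold fpF
  split
  · exact ENNReal.mul_ne_top (ENNReal.pow_ne_top ENNReal.ofReal_ne_top) (ppE_ne_top A i l)
  · exact ENNReal.zero_ne_top

lemma toReal_fpF (A : ℤ → Matrix (Fin N) (Fin N) ℝ) (hnn : ∀ m i j, 0 ≤ A m i j)
    {v : ℝ} (hv0 : 0 ≤ v) (a : ℤ) (i j : Fin N) (l : List (ℤ × Fin N)) :
    (fpF A v a i j l).toReal
      = if fpC a i j l then v ^ l.length * pathProb A i l else 0 := by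
  unfold fpF
  split
  · rw [← ofReal_pathProb A hnn, ← ENNReal.ofReal_pow hv0,
      ← ENNReal.ofReal_mul (pow_nonneg hv0 _), ENNReal.toReal_ofReal
      (mul_nonneg (pow_nonneg hv0 _) (pathProb_nonneg A hnn i l))]
  · simp

lemma passMat_apply_eq (A : ℤ → Matrix (Fin N) (Fin N) ℝ) (hnn : ∀ m i j, 0 ≤ A m i j)
    {v : ℝ} (hv0 : 0 ≤ v) (a : ℤ) (i j : Fin N) :
    passMat A v 0 a i j = (fpE A v a i j).toReal := by
  have h1 : passMat A v 0 a i j = ∑' l, (fpF A v a i j l).toReal := by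
    simp only [passMat, Matrix.of_apply]
    refine tsum_congr fun l => ?_
    rw [toReal_fpF A hnn hv0 a i j l]
    exact if_congr Iff.rfl rfl rfl
  rw [h1, ← ENNReal.tsum_toReal_eq (fun l => fpF_ne_top A v a i j l)]
  rfl

lemma fpE_ne_top (A : ℤ → Matrix (Fin N) (Fin N) ℝ)
    (hrowE : ∀ i, ∑' p : ℤ × Fin N, ENNReal.ofReal (A p.1 i p.2) = 1)
    {v : ℝ} (hv1 : v ≤ 1) (a : ℤ) (i j : Fin N) : fpE A v a i j ≠ ∞ :=
  ((fpE_le_one A hrowE hv1 a i j).trans_lt ENNReal.one_lt_top).ne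

lemma passMat_zero (A : ℤ → Matrix (Fin N) (Fin N) ℝ) (v : ℝ) :
    passMat A v 0 0 = 1 := by
  ext i j
  simp only [passMat, Matrix.of_apply]
  rw [tsum_eq_single ([] : List (ℤ × Fin N))]
  · by_cases h : i = j
    · simp [lev, endPhase, pathProb, Matrix.one_apply, h]
    · simp [lev, endPhase, pathProb, Matrix.one_apply, h]
  · intro l hl
    rw [if_neg]
    rintro ⟨hc, -, -⟩
    have hlen : 0 < l.length := List.length_pos_iff.2 hl
    have := hc 0 hlen
    rw [lev_zero] at this
    omega

lemma passMat_pow (A : ℤ → Matrix (Fin N) (Fin N) ℝ) (hnn : ∀ m i j, 0 ≤ A m i j)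
    (hA1 : ∀ m : ℤ, 1 < m → A m = 0)
    (hrowE : ∀ i, ∑' p : ℤ × Fin N, ENNReal.ofReal (A p.1 i p.2) = 1)
    {v : ℝ} (hv0 : 0 ≤ v) (hv1 : v ≤ 1) :
    ∀ u : ℕ, passMat A v 0 (u : ℤ) = (passMat A v 0 1) ^ u
  | 0 => by rw [Nat.cast_zero, pow_zero, passMat_zero]
  | u + 1 => by
      have hstep : passMat A v 0 ((u : ℤ) + 1)
          = passMat A v 0 1 * passMat A v 0 (u : ℤ) := by
        ext i j
        rw [Matrix.mul_apply, passMat_apply_eq A hnn hv0, fpE_succ A hA1 v u i j,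
          ENNReal.toReal_sum (fun k _ => ENNReal.mul_ne_top
            (fpE_ne_top A hrowE hv1 1 i k) (fpE_ne_top A hrowE hv1 (u : ℤ) k j))]
        refine Finset.sum_congr rfl fun k _ => ?_
        rw [ENNReal.toReal_mul, passMat_apply_eq A hnn hv0, passMat_apply_eq A hnn hv0]
      rw [show ((u + 1 : ℕ) : ℤ) = (u : ℤ) + 1 by push_cast; ring, hstep,
        passMat_pow A hnn hA1 hrowE hv0 hv1 u, pow_succ']

end GSaux

namespace GSaux

variable {N : ℕ}

/-- conversion of a claim-size pair to a MAC increment pair. -/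
def cnv {N : ℕ} : ℕ × Fin N → ℤ × Fin N := fun p => (1 - (p.1 : ℤ), p.2)

lemma cnv_injective : Function.Injective (cnv (N := N)) := by
  rintro ⟨z, j⟩ ⟨z', j'⟩ h
  simp only [cnv, Prod.mk.injEq] at h
  obtain ⟨h1, h2⟩ := h
  have : z = z' := by omega
  rw [this, h2]

lemma Amat_nonneg (Λ : ℕ → Matrix (Fin N) (Fin N) ℝ) (hnn : ∀ m i j, 0 ≤ Λ m i j) :
    ∀ m i j, 0 ≤ Amat Λ m i j := by
  intro m i j
  unfold Amat
  split
  · exact hnn _ _ _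
  · simp

lemma Amat_one (Λ : ℕ → Matrix (Fin N) (Fin N) ℝ) : ∀ m : ℤ, 1 < m → Amat Λ m = 0 :=
  fun m h => if_neg (by omega)

lemma Amat_rowE (Λ : ℕ → Matrix (Fin N) (Fin N) ℝ) (hnn : ∀ m i j, 0 ≤ Λ m i j)
    (hstoch : ∀ i, HasSum (fun p : ℕ × Fin N => Λ p.1 i p.2) 1) :
    ∀ i, ∑' p : ℤ × Fin N, ENNReal.ofReal (Amat Λ p.1 i p.2) = 1 := by
  intro i
  rw [← Function.Injective.tsum_eq (cnv_injective (N := N)) (f := fun p : ℤ × Fin N =>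
    ENNReal.ofReal (Amat Λ p.1 i p.2)) ?_]
  · have hc : ∀ p : ℕ × Fin N,
        ENNReal.ofReal (Amat Λ (cnv p).1 i (cnv p).2) = ENNReal.ofReal (Λ p.1 i p.2) := by
      rintro ⟨z, j⟩
      simp only [cnv]
      unfold Amat
      rw [if_pos (by omega : (1 : ℤ) - (z : ℤ) ≤ 1)]
      rw [show (1 - (1 - (z : ℤ))).toNat = z by omega]
    rw [tsum_congr hc, ← ENNReal.ofReal_tsum_of_nonneg (fun p => hnn _ _ _)
      (hstoch i).summable, (hstoch i).tsum_eq, ENNReal.ofReal_one]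
  · intro p hp
    rw [Function.mem_support] at hp
    have hle : p.1 ≤ 1 := by
      by_contra hc
      push_neg at hc
      apply hp
      unfold Amat
      rw [if_neg (by omega)]
      simp
    refine ⟨((1 - p.1).toNat, p.2), ?_⟩
    have h1 : ((1 - p.1).toNat : ℤ) = 1 - p.1 := Int.toNat_of_nonneg (by omega)
    simp only [cnv]
    rw [Prod.ext_iff]
    exact ⟨by simp only []; omega, rfl⟩

lemma sum_fst_cnv : ∀ l : List (ℕ × Fin N),
    ((l.map cnv).map Prod.fst).sum = (l.length : ℤ) - (l.map fun p => (p.1 : ℤ)).sum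
  | [] => by simp
  | p :: t => by
      simp only [List.map_cons, List.sum_cons, List.length_cons, sum_fst_cnv t]
      simp only [cnv]
      push_cast
      ring

lemma lev_cnv (u : ℤ) (l : List (ℕ × Fin N)) {k : ℕ} (hk : k ≤ l.length) :
    lev 0 (l.map cnv) k = u - dlev u l k := by
  unfold lev dlev
  rw [← List.map_take, sum_fst_cnv, List.length_take, min_eq_left hk]
  ring

lemma pathProb_cnv (Λ : ℕ → Matrix (Fin N) (Fin N) ℝ) :
    ∀ (i : Fin N) (l : List (ℕ × Fin N)),
    pathProb (Amat Λ) i (l.map cnv) = claimProb Λ i l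
  | i, [] => rfl
  | i, (z, j) :: t => by
      show pathProb (Amat Λ) i ((1 - (z : ℤ), j) :: t.map cnv) = claimProb Λ i ((z, j) :: t)
      rw [pathProb, claimProb, pathProb_cnv Λ j t]
      congr 1
      unfold Amat
      rw [if_pos (by omega : (1 : ℤ) - (z : ℤ) ≤ 1)]
      rw [show (1 - (1 - (z : ℤ))).toNat = z by omega]

lemma endPhase_cnv (i : Fin N) (l : List (ℕ × Fin N)) :
    endPhase i (l.map cnv) = cEndPhase i l := by
  simp only [endPhase, cEndPhase, List.foldl_map]
  rfl

lemma summand_eq (Λ : ℕ → Matrix (Fin N) (Fin N) ℝ) (v : ℝ) (u : ℤ) (i j : Fin N)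
    (l' : List (ℕ × Fin N)) :
    (if (∀ k < (l'.map cnv).length, lev 0 (l'.map cnv) k < u) ∧
        u ≤ lev 0 (l'.map cnv) (l'.map cnv).length ∧ endPhase i (l'.map cnv) = j
     then v ^ (l'.map cnv).length * pathProb (Amat Λ) i (l'.map cnv) else 0)
    = (if (∀ k < l'.length, 0 < dlev u l' k) ∧ dlev u l' l'.length ≤ 0 ∧ cEndPhase i l' = j
       then v ^ l'.length * claimProb Λ i l' else 0) := by
  have hlen : (l'.map cnv).length = l'.length := List.length_map _
  have hiff : ((∀ k < (l'.map cnv).length, lev 0 (l'.map cnv) k < u) ∧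
        u ≤ lev 0 (l'.map cnv) (l'.map cnv).length ∧ endPhase i (l'.map cnv) = j)
      ↔ ((∀ k < l'.length, 0 < dlev u l' k) ∧ dlev u l' l'.length ≤ 0 ∧
        cEndPhase i l' = j) := by
    rw [hlen, endPhase_cnv]
    constructor
    · rintro ⟨h1, h2, h3⟩
      refine ⟨fun k hk => ?_, ?_, h3⟩
      · have := h1 k hk
        rw [lev_cnv u l' (le_of_lt hk)] at this
        omega
      · rw [lev_cnv u l' le_rfl] at h2
        omega
    · rintro ⟨h1, h2, h3⟩
      refine ⟨fun k hk => ?_, ?_, h3⟩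
      · have := h1 k hk
        rw [lev_cnv u l' (le_of_lt hk)]
        omega
      · rw [lev_cnv u l' le_rfl]
        omega
  rw [if_congr hiff (by rw [hlen, pathProb_cnv]) rfl]

lemma dualGS_eq (Λ : ℕ → Matrix (Fin N) (Fin N) ℝ)
    (hA1 : ∀ m : ℤ, 1 < m → Amat Λ m = 0) (v : ℝ) (u : ℤ) :
    dualGS Λ v u = passMat (Amat Λ) v 0 u := by
  ext i j
  simp only [dualGS, passMat, Matrix.of_apply]
  refine (tsum_eq_tsum_of_ne_zero_bij (fun x => x.1.map cnv) ?_ ?_ ?_).symm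
  · intro x y h
    exact Subtype.coe_injective ((List.map_injective_iff.mpr cnv_injective) h)
  · intro l hl
    rw [Function.mem_support] at hl
    by_cases hcond : (∀ k < l.length, lev 0 l k < u) ∧ u ≤ lev 0 l l.length ∧
        endPhase i l = j
    · have hpp : pathProb (Amat Λ) i l ≠ 0 := fun h0 => hl (by rw [if_pos hcond, h0, mul_zero])
      have hinc : ∀ p ∈ l, p.1 ≤ 1 := by
        intro p hp
        by_contra hc
        push_neg at hc
        exact hpp (pathProb_eq_zero (Amat Λ) hA1 i l ⟨p, hp, hc⟩)
      set l' : List (ℕ × Fin N) := l.map (fun p => ((1 - p.1).toNat, p.2)) with hl'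
      have hml : l'.map cnv = l := by
        rw [hl', List.map_map]
        conv_rhs => rw [← List.map_id l]
        refine List.map_congr_left fun p hp => ?_
        have hp1 := hinc p hp
        rcases p with ⟨m, jj⟩
        simp only [Function.comp, cnv, id]
        have h1 : ((1 - m).toNat : ℤ) = 1 - m := Int.toNat_of_nonneg (by omega)
        rw [Prod.ext_iff]
        exact ⟨by simp only []; omega, rfl⟩
      have hgl : (if (∀ k < l'.length, 0 < dlev u l' k) ∧ dlev u l' l'.length ≤ 0 ∧
            cEndPhase i l' = j then v ^ l'.length * claimProb Λ i l' else 0)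
          = (if (∀ k < l.length, lev 0 l k < u) ∧ u ≤ lev 0 l l.length ∧
            endPhase i l = j then v ^ l.length * pathProb (Amat Λ) i l else 0) := by
        rw [← summand_eq Λ v u i j l', hml]
      refine ⟨⟨l', ?_⟩, hml⟩
      rw [Function.mem_support, hgl]
      exact hl
    · exact absurd (if_neg hcond) hl
  · rintro ⟨l', hl'⟩
    exact summand_eq Λ v u i j l'

end GSaux

open GSaux

/-- The Gerber–Shiu matrix of the dual risk process with initial capital `u`
equals `G_v^u`, and hence the unconditional Gerber–Shiu function is `φ̂(u) = αᵀ G_v^u e`. -/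
theorem dual_gerber_shiu (N : ℕ) (Λ : ℕ → Matrix (Fin N) (Fin N) ℝ)
    (hnn : ∀ m i j, 0 ≤ Λ m i j)
    (hstoch : ∀ i, HasSum (fun p : ℕ × Fin N => Λ p.1 i p.2) 1)
    (v : ℝ) (hv0 : 0 < v) (hv1 : v ≤ 1) (u : ℕ)
    (α : Fin N → ℝ) (hα : ∀ i, 0 ≤ α i) (hαsum : ∑ i, α i = 1) :
    dualGS Λ v (u : ℤ) = (passMat (Amat Λ) v 0 1) ^ u ∧
      ∑ i, ∑ j, α i * dualGS Λ v (u : ℤ) i j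
        = α ⬝ᵥ ((passMat (Amat Λ) v 0 1) ^ u) *ᵥ (fun _ => (1 : ℝ)) := by
  have hAnn := Amat_nonneg Λ hnn
  have hA1 := Amat_one Λ
  have hrowE := Amat_rowE Λ hnn hstoch
  have h1 : dualGS Λ v (u : ℤ) = (passMat (Amat Λ) v 0 1) ^ u := by
    rw [dualGS_eq Λ hA1 v (u : ℤ),
      passMat_pow (Amat Λ) hAnn hA1 hrowE hv0.le hv1 u]
  refine ⟨h1, ?_⟩
  rw [h1]
  simp [Matrix.mulVec, dotProduct, Finset.mul_sum]
end
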